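/- arXiv:1409.4274 — 4 statements merged into one kernel-verified Lean document; each statement's English description precedes it below -/
import Mathlib

section
/- Let 𝒩 ⊆ 𝒩₁¹ be a uniformly ψ₁-integrating set with inf_{μ∈𝒩} m_μ > 1. Then for every ε > 0 there is a δ > 0 such that for all μ₁, μ₂ ∈ 𝒩 with d_TV(μ₁,μ₂) ≤ δ one has |ℙ^{μ₁}[Z_n = 0] − ℙ^{μ₂}[Z_n = 0]| ≤ ε for all n ∈ ℕ. -/
open MeasureTheory ProbabilityTheory ENNReal Metric

noncomputable section

/-- The canonical sample space of the Galton–Watson process: one ℕ₀-valued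
coordinate `X_{k,i} = ω (k, i)` for each generation `k` and individual `i`. -/
abbrev GWOmega : Type := (ℕ × ℕ) → ℕ

/-- Generation sizes of the Galton–Watson process: `Z 0 = 1` and
`Z (n+1) ω = ∑_{i < Z n ω} X_{n,i}(ω)`. -/
def Z : ℕ → GWOmega → ℕ
  | 0, _ => 1
  | n + 1, ω => ∑ i ∈ Finset.range (Z n ω), ω (n, i)

/-- The Lotka–Nagaev estimator `m̂_n = Z_n / Z_{n-1}`, with value `0`
if `Z_{n-1} = 0` (division by `0` in `ℝ≥0` yields `0`). -/
def mhat (n : ℕ) (ω : GWOmega) : NNReal := (Z n ω : NNReal) / (Z (n - 1) ω : NNReal)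

/-- `IsGWMeasure P μ` says that `P` is the product measure `ℙ^μ = μ^{⊗(ℕ₀×ℕ)}`:
a probability measure under which the coordinates are i.i.d. with law `μ`. -/
def IsGWMeasure (P : Measure GWOmega) (μ : PMF ℕ) : Prop :=
  IsProbabilityMeasure P ∧
    iIndepFun (fun ki : ℕ × ℕ => fun ω : GWOmega => ω ki) P ∧
    ∀ ki : ℕ × ℕ, P.map (fun ω => ω ki) = μ.toMeasure

/-- The mean `m_μ = ∑_k k·μ{k}`, as an extended nonnegative real. -/
def mMean (μ : PMF ℕ) : ℝ≥0∞ := ∑' k : ℕ, (k : ℝ≥0∞) * μ k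

/-- The mean `m_μ` as a real number. -/
def mReal (μ : PMF ℕ) : ℝ := (mMean μ).toReal

/-- The set `𝒩₁¹` of all offspring laws on `ℕ₀` with finite mean. -/
def N11 : Set (PMF ℕ) := {μ | mMean μ < ⊤}

/-- Total variation distance `d_TV(μ₁,μ₂) = (1/2)∑_k |μ₁{k} - μ₂{k}|` on laws on `ℕ₀`. -/
def dTV (μ₁ μ₂ : PMF ℕ) : ℝ := (1 / 2) * ∑' k : ℕ, |(μ₁ k).toReal - (μ₂ k).toReal|

/-- The tail mean `∑_{k ≥ ℓ} k·μ{k}`. -/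
def tailMean (μ : PMF ℕ) (ℓ : ℕ) : ℝ≥0∞ :=
  ∑' k : ℕ, if ℓ ≤ k then (k : ℝ≥0∞) * μ k else 0

/-- `𝒩` is locally uniformly ψ₁-integrating. -/
def LocUnifIntegrating (N : Set (PMF ℕ)) : Prop :=
  ∀ ε > (0 : ℝ), ∀ μ₁ ∈ N, ∃ δ > (0 : ℝ), ∃ ℓ : ℕ,
    ∀ μ₂ ∈ N, dTV μ₁ μ₂ ≤ δ → tailMean μ₂ ℓ ≤ ENNReal.ofReal ε

/-- `𝒩` is uniformly ψ₁-integrating. -/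
def UnifIntegrating (N : Set (PMF ℕ)) : Prop :=
  ∀ ε > (0 : ℝ), ∃ ℓ : ℕ, ∀ μ ∈ N, tailMean μ ℓ ≤ ENNReal.ofReal ε

/-- The Prohorov distance between two (probability) measures on `ℝ₊ = ℝ≥0`:
`ρ(ν₁,ν₂) = inf{ε > 0 : ν₁[A] ≤ ν₂[A^ε] + ε for all Borel A}`. -/
def prohorov (ν₁ ν₂ : Measure NNReal) : ℝ :=
  sInf {ε : ℝ | 0 < ε ∧ ∀ A : Set NNReal, MeasurableSet A →
    ν₁ A ≤ ν₂ (Metric.cthickening ε A) + ENNReal.ofReal ε}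

/-- The law of the Lotka–Nagaev estimator `m̂_n` under `P`, as a measure on `ℝ₊`. -/
def lawMhat (P : Measure GWOmega) (n : ℕ) : Measure NNReal := P.map (mhat n)

/-- Conditional probability `P[B | A] = P(B ∩ A)/P(A)`. -/
def condProb (P : Measure GWOmega) (B A : Set GWOmega) : ℝ≥0∞ := P (B ∩ A) / P A

/-- The extinction probability `q_μ = ℙ^μ[Z_n = 0 for some n]`. -/
def extinctProb (P : Measure GWOmega) : ℝ := (P {ω | ∃ n, Z n ω = 0}).toReal

/-- The derivative `f_μ'(s) = ∑_k k·s^{k-1}·μ{k}` of the generating function of `μ`. -/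
def fgenDeriv (μ : PMF ℕ) (s : ℝ) : ℝ := ∑' k : ℕ, (k : ℝ) * s ^ (k - 1) * (μ k).toReal

/-- Total variation distance between two measures on a discrete space
(used for laws on `ℕ₀ⁿ`). -/
def dTVmeas {α : Type*} [MeasurableSpace α] (ν₁ ν₂ : Measure α) : ℝ :=
  (1 / 2) * ∑' x : α, |(ν₁ {x}).toReal - (ν₂ {x}).toReal|

end


noncomputable section

namespace GWaux

/-- σ-algebra generated by the coordinates in `t`. -/
def Malg (t : Set (ℕ × ℕ)) : MeasurableSpace GWOmega :=
  ⨆ ki ∈ t, MeasurableSpace.comap (fun ω : GWOmega => ω ki) inferInstance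

lemma Malg_le (t : Set (ℕ × ℕ)) : Malg t ≤ (inferInstance : MeasurableSpace GWOmega) := by
  refine iSup₂_le fun ki _ => ?_
  exact MeasurableSpace.comap_le_iff_le_map.mpr fun s hs => (measurable_pi_apply ki) hs

lemma ev_meas {t : Set (ℕ × ℕ)} {ki : ℕ × ℕ} (hki : ki ∈ t) :
    Measurable[Malg t] (fun ω : GWOmega => ω ki) := by
  refine measurable_iff_comap_le.mpr ?_
  exact le_biSup (fun ki : ℕ × ℕ => MeasurableSpace.comap (fun ω : GWOmega => ω ki)
    (inferInstance : MeasurableSpace ℕ)) hki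

lemma sum_meas (t : Set (ℕ × ℕ)) (n : ℕ) (j : ℕ) (h : ∀ i < j, (n, i) ∈ t) :
    Measurable[Malg t] (fun ω : GWOmega => ∑ i ∈ Finset.range j, ω (n, i)) := by
  refine Finset.measurable_sum _ fun i hi => ?_
  exact ev_meas (h i (Finset.mem_range.mp hi))

lemma Z_meas (n : ℕ) : Measurable[Malg {q : ℕ × ℕ | q.1 < n}] (Z n) := by
  induction n with
  | zero => exact measurable_const
  | succ n ih =>
    have hle : Malg {q : ℕ × ℕ | q.1 < n} ≤ Malg {q : ℕ × ℕ | q.1 < n + 1} :=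
      biSup_mono fun ki hki => Nat.lt_succ_of_lt hki
    have hZ : Measurable[Malg {q : ℕ × ℕ | q.1 < n + 1}] (Z n) :=
      fun s hs => hle _ (ih hs)
    refine @measurable_to_countable' ℕ GWOmega _ _ (Malg {q : ℕ × ℕ | q.1 < n + 1}) _ (fun j => ?_)
    have : (Z (n + 1)) ⁻¹' {j} =
        ⋃ m : ℕ, (Z n ⁻¹' {m}) ∩ ((fun ω : GWOmega => ∑ i ∈ Finset.range m, ω (n, i)) ⁻¹' {j}) := by
      ext ω
      simp only [Set.mem_preimage, Set.mem_singleton_iff, Set.mem_iUnion, Set.mem_inter_iff]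
      constructor
      · intro h; exact ⟨Z n ω, rfl, h⟩
      · rintro ⟨m, hm, h⟩; rw [show Z (n+1) ω = ∑ i ∈ Finset.range (Z n ω), ω (n, i) from rfl, hm]; exact h
    rw [this]
    refine MeasurableSet.iUnion fun m => MeasurableSet.inter ?_ ?_
    · exact hZ (measurableSet_singleton j)
    · exact sum_meas _ n m (fun i _ => by simp) (measurableSet_singleton j)

lemma Z_measurable (n : ℕ) : Measurable (Z n) := (Z_meas n).mono (Malg_le _) le_rfl

lemma sum_measurable (n j : ℕ) :
    Measurable (fun ω : GWOmega => ∑ i ∈ Finset.range j, ω (n, i)) :=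
  (sum_meas Set.univ n j (fun _ _ => Set.mem_univ _)).mono (Malg_le _) le_rfl

/-- Key independence: if `g` is measurable wrt coordinates in `t` and `h` wrt coordinates
in `tᶜ`, then level sets are independent. -/
lemma indep_pair {P : Measure GWOmega}
    (h2 : iIndepFun (fun ki : ℕ × ℕ => fun ω : GWOmega => ω ki) P)
    (t : Set (ℕ × ℕ)) {g h : GWOmega → ℕ}
    (hg : Measurable[Malg t] g) (hh : Measurable[Malg tᶜ] h) (u v : ℕ) :
    P ({ω | g ω = u} ∩ {ω | h ω = v}) = P {ω | g ω = u} * P {ω | h ω = v} := by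
  have h_le : ∀ ki : ℕ × ℕ,
      MeasurableSpace.comap (fun ω : GWOmega => ω ki) inferInstance ≤
        (inferInstance : MeasurableSpace GWOmega) :=
    fun ki => MeasurableSpace.comap_le_iff_le_map.mpr fun s hs => (measurable_pi_apply ki) hs
  have hi : Indep (Malg t) (Malg tᶜ) P := indep_biSup_compl h_le h2.iIndep t
  have hgs : MeasurableSet[Malg t] {ω | g ω = u} := hg (measurableSet_singleton u)
  have hhs : MeasurableSet[Malg tᶜ] {ω | h ω = v} := hh (measurableSet_singleton v)
  exact (Indep_iff _ _ _).mp hi _ _ hgs hhs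


/-- Law of the sum of `j` i.i.d. offspring variables: `j`-fold convolution of `μ`. -/
def conv (μ : PMF ℕ) : ℕ → ℕ → ℝ≥0∞
  | 0, v => if v = 0 then 1 else 0
  | (j+1), v => ∑' q : ℕ × ℕ, if q.1 + q.2 = v then conv μ j q.1 * μ q.2 else 0

/-- Generating function of `μ`, in `ℝ≥0∞`. -/
def Fgen (μ : PMF ℕ) (s : ℝ≥0∞) : ℝ≥0∞ := ∑' k, μ k * s ^ k

section Prob

variable {P : Measure GWOmega} {μ : PMF ℕ}

lemma coord_law (hP : IsGWMeasure P μ) (ki : ℕ × ℕ) (v : ℕ) :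
    P {ω : GWOmega | ω ki = v} = μ v := by
  have hmeas : Measurable (fun ω : GWOmega => ω ki) := measurable_pi_apply ki
  have : P {ω : GWOmega | ω ki = v} = (P.map (fun ω : GWOmega => ω ki)) {v} := by
    rw [Measure.map_apply hmeas (measurableSet_singleton v)]
    rfl
  rw [this, hP.2.2 ki, PMF.toMeasure_apply_singleton _ _ (measurableSet_singleton v)]

lemma probS (hP : IsGWMeasure P μ) (n : ℕ) :
    ∀ j v : ℕ, P {ω : GWOmega | (∑ i ∈ Finset.range j, ω (n, i)) = v} = conv μ j v := by
  intro j
  induction j with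
  | zero =>
    intro v
    by_cases hv : v = 0
    · subst hv
      have hs : {ω : GWOmega | (∑ i ∈ Finset.range 0, ω (n, i)) = 0} = Set.univ := by
        ext ω; simp
      rw [hs, hP.1.measure_univ]; simp [conv]
    · have hs : {ω : GWOmega | (∑ i ∈ Finset.range 0, ω (n, i)) = v} = ∅ := by
        ext ω; simp [eq_comm, hv]
      rw [hs, measure_empty]; simp [conv, hv]
  | succ j ih =>
    intro v
    have hset : {ω : GWOmega | (∑ i ∈ Finset.range (j+1), ω (n, i)) = v} =
        ⋃ q : ℕ × ℕ, (if q.1 + q.2 = v then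
          ({ω : GWOmega | (∑ i ∈ Finset.range j, ω (n, i)) = q.1} ∩ {ω : GWOmega | ω (n, j) = q.2})
          else (∅ : Set GWOmega)) := by
      ext ω
      simp only [Set.mem_setOf_eq, Set.mem_iUnion]
      constructor
      · intro h
        refine ⟨(∑ i ∈ Finset.range j, ω (n, i), ω (n, j)), ?_⟩
        rw [if_pos (by rw [← h, Finset.sum_range_succ])]
        exact ⟨rfl, rfl⟩
      · rintro ⟨q, hq⟩
        by_cases hc : q.1 + q.2 = v
        · rw [if_pos hc] at hq
          rw [Finset.sum_range_succ, hq.1, hq.2, hc]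
        · rw [if_neg hc] at hq; exact absurd hq (Set.notMem_empty ω)
    have hdisj : Pairwise (Function.onFun Disjoint (fun q : ℕ × ℕ =>
        (if q.1 + q.2 = v then
          ({ω : GWOmega | (∑ i ∈ Finset.range j, ω (n, i)) = q.1} ∩ {ω : GWOmega | ω (n, j) = q.2})
          else (∅ : Set GWOmega)))) := by
      intro q q' hqq'
      refine Set.disjoint_left.mpr fun ω hω hω' => ?_
      beta_reduce at hω hω'
      by_cases hc : q.1 + q.2 = v
      · by_cases hc' : q'.1 + q'.2 = v
        · rw [if_pos hc] at hω; rw [if_pos hc'] at hω'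
          exact hqq' (Prod.ext (hω.1.symm.trans hω'.1) (hω.2.symm.trans hω'.2))
        · rw [if_neg hc'] at hω'; exact hω'
      · rw [if_neg hc] at hω; exact hω
    have hmeas : ∀ q : ℕ × ℕ, MeasurableSet (if q.1 + q.2 = v then
        ({ω : GWOmega | (∑ i ∈ Finset.range j, ω (n, i)) = q.1} ∩ {ω : GWOmega | ω (n, j) = q.2})
        else (∅ : Set GWOmega)) := by
      intro q
      by_cases hc : q.1 + q.2 = v
      · rw [if_pos hc]
        refine ((sum_measurable n j) (measurableSet_singleton q.1)).inter ?_
        exact show MeasurableSet ((fun ω : GWOmega => ω (n, j)) ⁻¹' {q.2}) from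
          (measurable_pi_apply (n, j)) (measurableSet_singleton q.2)
      · rw [if_neg hc]; exact MeasurableSet.empty
    rw [hset, measure_iUnion hdisj hmeas]
    show _ = conv μ (j+1) v
    rw [conv]
    congr 1
    funext q
    by_cases hc : q.1 + q.2 = v
    · rw [if_pos hc, if_pos hc]
      have hind : P ({ω : GWOmega | (∑ i ∈ Finset.range j, ω (n, i)) = q.1} ∩
          {ω : GWOmega | ω (n, j) = q.2}) =
          P {ω : GWOmega | (∑ i ∈ Finset.range j, ω (n, i)) = q.1} *
          P {ω : GWOmega | ω (n, j) = q.2} := by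
        refine indep_pair hP.2.1 {p : ℕ × ℕ | p.1 = n ∧ p.2 < j}
          (g := fun ω : GWOmega => ∑ i ∈ Finset.range j, ω (n, i))
          (h := fun ω : GWOmega => ω (n, j)) ?_ ?_ q.1 q.2
        · exact sum_meas _ n j (fun i hi => ⟨rfl, hi⟩)
        · exact ev_meas (by simp)
      rw [hind, ih q.1, coord_law hP (n, j) q.2]
    · rw [if_neg hc, if_neg hc, measure_empty]

lemma wRec (hP : IsGWMeasure P μ) (n v : ℕ) :
    P {ω : GWOmega | Z (n+1) ω = v} =
      ∑' j : ℕ, P {ω : GWOmega | Z n ω = j} * conv μ j v := by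
  have hset : {ω : GWOmega | Z (n+1) ω = v} =
      ⋃ j : ℕ, ({ω : GWOmega | Z n ω = j} ∩
        {ω : GWOmega | (∑ i ∈ Finset.range j, ω (n, i)) = v}) := by
    ext ω
    simp only [Set.mem_setOf_eq, Set.mem_iUnion, Set.mem_inter_iff]
    constructor
    · intro h; exact ⟨Z n ω, rfl, h⟩
    · rintro ⟨j, hj, h⟩
      rw [show Z (n+1) ω = ∑ i ∈ Finset.range (Z n ω), ω (n, i) from rfl, hj]
      exact h
  have hdisj : Pairwise (Function.onFun Disjoint (fun j : ℕ =>
      ({ω : GWOmega | Z n ω = j} ∩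
        {ω : GWOmega | (∑ i ∈ Finset.range j, ω (n, i)) = v}))) := by
    intro j j' hjj'
    refine Set.disjoint_left.mpr fun ω hω hω' => ?_
    exact hjj' (hω.1.symm.trans hω'.1)
  have hmeas : ∀ j : ℕ, MeasurableSet ({ω : GWOmega | Z n ω = j} ∩
      {ω : GWOmega | (∑ i ∈ Finset.range j, ω (n, i)) = v}) := fun j =>
    ((Z_measurable n) (measurableSet_singleton j)).inter
      ((sum_measurable n j) (measurableSet_singleton v))
  rw [hset, measure_iUnion hdisj hmeas]
  congr 1
  funext j
  have hind : P ({ω : GWOmega | Z n ω = j} ∩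
      {ω : GWOmega | (∑ i ∈ Finset.range j, ω (n, i)) = v}) =
      P {ω : GWOmega | Z n ω = j} *
      P {ω : GWOmega | (∑ i ∈ Finset.range j, ω (n, i)) = v} := by
    refine indep_pair hP.2.1 {q : ℕ × ℕ | q.1 < n}
      (g := Z n) (h := fun ω : GWOmega => ∑ i ∈ Finset.range j, ω (n, i)) (Z_meas n) ?_ j v
    exact sum_meas _ n j (fun i _ => by simp)
  rw [hind, probS hP n j v]

/-- Generating function of the `j`-fold convolution. -/
lemma convGen (μ : PMF ℕ) (j : ℕ) (s : ℝ≥0∞) :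
    ∑' v : ℕ, conv μ j v * s ^ v = (Fgen μ s) ^ j := by
  induction j with
  | zero =>
    rw [pow_zero]
    rw [tsum_eq_single 0 (by intro b hb; simp [conv, hb])]
    simp [conv]
  | succ j ih =>
    have h1 : ∀ v : ℕ, conv μ (j+1) v * s ^ v =
        ∑' q : ℕ × ℕ, (if q.1 + q.2 = v then conv μ j q.1 * μ q.2 else 0) * s ^ v := by
      intro v
      rw [conv, ENNReal.tsum_mul_right]
    calc ∑' v : ℕ, conv μ (j+1) v * s ^ v
        = ∑' (v : ℕ) (q : ℕ × ℕ), (if q.1 + q.2 = v then conv μ j q.1 * μ q.2 else 0) * s ^ v := by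
          exact tsum_congr h1
      _ = ∑' (q : ℕ × ℕ) (v : ℕ), (if q.1 + q.2 = v then conv μ j q.1 * μ q.2 else 0) * s ^ v :=
          ENNReal.tsum_comm
      _ = ∑' q : ℕ × ℕ, (conv μ j q.1 * s ^ q.1) * (μ q.2 * s ^ q.2) := by
          refine tsum_congr fun q => ?_
          rw [tsum_eq_single (q.1 + q.2) (by intro v hv; rw [if_neg (Ne.symm hv), zero_mul])]
          rw [if_pos rfl, pow_add]; ring
      _ = ∑' (u : ℕ) (x : ℕ), (conv μ j u * s ^ u) * (μ x * s ^ x) := ENNReal.tsum_prod'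
      _ = ∑' (u : ℕ), (conv μ j u * s ^ u) * (∑' x : ℕ, μ x * s ^ x) :=
          tsum_congr fun u => ENNReal.tsum_mul_left
      _ = (∑' u : ℕ, conv μ j u * s ^ u) * (∑' x : ℕ, μ x * s ^ x) := ENNReal.tsum_mul_right
      _ = (Fgen μ s) ^ (j+1) := by rw [ih]; rw [pow_succ]; rfl

/-- Generating function of `Z n` is the `n`-th iterate of `Fgen μ`. -/
lemma genZ (hP : IsGWMeasure P μ) :
    ∀ n : ℕ, ∀ s : ℝ≥0∞,
      ∑' j : ℕ, P {ω : GWOmega | Z n ω = j} * s ^ j = (Fgen μ)^[n] s := by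
  intro n
  induction n with
  | zero =>
    intro s
    rw [Function.iterate_zero, id]
    rw [tsum_eq_single 1 ?_]
    · have : {ω : GWOmega | Z 0 ω = 1} = Set.univ := by
        ext ω; simp [Z]
      rw [this, hP.1.measure_univ, one_mul, pow_one]
    · intro b hb
      have : {ω : GWOmega | Z 0 ω = b} = ∅ := by
        ext ω; simp [Z, Ne.symm hb]
      rw [this, measure_empty, zero_mul]
  | succ n ih =>
    intro s
    calc ∑' j : ℕ, P {ω : GWOmega | Z (n+1) ω = j} * s ^ j
        = ∑' (j : ℕ) (k : ℕ), (P {ω : GWOmega | Z n ω = k} * conv μ k j) * s ^ j := by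
          refine tsum_congr fun j => ?_
          rw [wRec hP n j, ENNReal.tsum_mul_right]
      _ = ∑' (k : ℕ) (j : ℕ), P {ω : GWOmega | Z n ω = k} * (conv μ k j * s ^ j) := by
          rw [ENNReal.tsum_comm]
          exact tsum_congr fun k => tsum_congr fun j => by ring
      _ = ∑' k : ℕ, P {ω : GWOmega | Z n ω = k} * (Fgen μ s) ^ k := by
          refine tsum_congr fun k => ?_
          rw [ENNReal.tsum_mul_left, convGen]
      _ = (Fgen μ)^[n+1] s := by
          rw [Function.iterate_succ_apply]
          exact ih (Fgen μ s)

/-- The central identity:  `ℙ^μ[Z_n = 0] = f_μ^{∘n}(0)`. -/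
lemma extinct_eq (hP : IsGWMeasure P μ) (n : ℕ) :
    P {ω : GWOmega | Z n ω = 0} = (Fgen μ)^[n] 0 := by
  have := genZ hP n 0
  rw [← this]
  rw [tsum_eq_single 0 (by intro b hb; rw [zero_pow hb, mul_zero])]
  rw [pow_zero, mul_one]

end Prob


section Analytic

/-- Real generating function. -/
def freal (μ : PMF ℕ) (x : ℝ) : ℝ := ∑' k : ℕ, (μ k).toReal * x ^ k

variable {μ : PMF ℕ}

lemma psummable (μ : PMF ℕ) : Summable (fun k : ℕ => (μ k).toReal) :=
  ENNReal.summable_toReal (by rw [μ.tsum_coe]; exact ENNReal.one_ne_top)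

lemma psum_one (μ : PMF ℕ) : ∑' k : ℕ, (μ k).toReal = 1 := by
  rw [← ENNReal.tsum_toReal_eq (fun k => PMF.apply_ne_top μ k), μ.tsum_coe, ENNReal.toReal_one]

lemma term_summable (μ : PMF ℕ) {x : ℝ} (hx0 : 0 ≤ x) (hx1 : x ≤ 1) :
    Summable (fun k : ℕ => (μ k).toReal * x ^ k) := by
  refine Summable.of_nonneg_of_le
    (fun k => mul_nonneg ENNReal.toReal_nonneg (pow_nonneg hx0 k))
    (fun k => mul_le_of_le_one_right ENNReal.toReal_nonneg (pow_le_one₀ hx0 hx1))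
    (psummable μ)

lemma freal_nonneg {x : ℝ} (hx0 : 0 ≤ x) : 0 ≤ freal μ x :=
  tsum_nonneg fun k => mul_nonneg ENNReal.toReal_nonneg (pow_nonneg hx0 k)

lemma freal_mono {x y : ℝ} (hx0 : 0 ≤ x) (hxy : x ≤ y) (hy1 : y ≤ 1) :
    freal μ x ≤ freal μ y := by
  refine Summable.tsum_le_tsum (fun k => ?_) (term_summable μ hx0 (hxy.trans hy1))
    (term_summable μ (hx0.trans hxy) hy1)
  exact mul_le_mul_of_nonneg_left (pow_le_pow_left₀ hx0 hxy k) ENNReal.toReal_nonneg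

lemma freal_le_one {x : ℝ} (hx0 : 0 ≤ x) (hx1 : x ≤ 1) : freal μ x ≤ 1 := by
  rw [← psum_one μ]
  refine Summable.tsum_le_tsum (fun k => ?_) (term_summable μ hx0 hx1) (psummable μ)
  exact mul_le_of_le_one_right ENNReal.toReal_nonneg (pow_le_one₀ hx0 hx1)

lemma Fgen_toReal (μ : PMF ℕ) {x : ℝ} (hx : 0 ≤ x) :
    (Fgen μ (ENNReal.ofReal x)).toReal = freal μ x := by
  rw [Fgen, ENNReal.tsum_toReal_eq (fun k =>
    ENNReal.mul_ne_top (PMF.apply_ne_top μ k) (pow_ne_top ENNReal.ofReal_ne_top))]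
  exact tsum_congr fun k => by
    rw [ENNReal.toReal_mul, ENNReal.toReal_pow, ENNReal.toReal_ofReal hx]

lemma Fgen_le_one (μ : PMF ℕ) {s : ℝ≥0∞} (hs : s ≤ 1) : Fgen μ s ≤ 1 := by
  rw [← μ.tsum_coe]
  exact ENNReal.tsum_le_tsum fun k =>
    mul_le_of_le_one_right zero_le (pow_le_one' hs k)

lemma iter_le_one (μ : PMF ℕ) (n : ℕ) : (Fgen μ)^[n] 0 ≤ 1 := by
  induction n with
  | zero => simp
  | succ n ih =>
    rw [Function.iterate_succ_apply']
    exact Fgen_le_one μ ih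

lemma iter_ne_top (μ : PMF ℕ) (n : ℕ) : (Fgen μ)^[n] 0 ≠ ⊤ :=
  ((iter_le_one μ n).trans_lt ENNReal.one_lt_top).ne

/-- The real extinction-by-generation-n probability. -/
def aa (μ : PMF ℕ) (n : ℕ) : ℝ := ((Fgen μ)^[n] 0).toReal

lemma aa_nonneg (μ : PMF ℕ) (n : ℕ) : 0 ≤ aa μ n := ENNReal.toReal_nonneg

lemma aa_le_one (μ : PMF ℕ) (n : ℕ) : aa μ n ≤ 1 := by
  rw [aa, ← ENNReal.toReal_one]
  exact ENNReal.toReal_mono ENNReal.one_ne_top (iter_le_one μ n)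

lemma aa_zero (μ : PMF ℕ) : aa μ 0 = 0 := by simp [aa]

lemma aa_succ (μ : PMF ℕ) (n : ℕ) : aa μ (n + 1) = freal μ (aa μ n) := by
  rw [aa, Function.iterate_succ_apply',
    show (Fgen μ)^[n] 0 = ENNReal.ofReal (aa μ n) from (ENNReal.ofReal_toReal (iter_ne_top μ n)).symm,
    Fgen_toReal μ (aa_nonneg μ n)]

lemma extinct_toReal {P : Measure GWOmega} (hP : IsGWMeasure P μ) (n : ℕ) :
    (P {ω : GWOmega | Z n ω = 0}).toReal = aa μ n := by
  rw [extinct_eq hP n]; rfl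

lemma freal_convex (μ : PMF ℕ) : ConvexOn ℝ (Set.Icc (0:ℝ) 1) (freal μ) := by
  refine ⟨convex_Icc 0 1, ?_⟩
  intro x hx y hy a b ha hb hab
  have hmem : a • x + b • y ∈ Set.Icc (0:ℝ) 1 := (convex_Icc 0 1) hx hy ha hb hab
  have hterm : ∀ k : ℕ, (μ k).toReal * (a • x + b • y) ^ k ≤
      a * ((μ k).toReal * x ^ k) + b * ((μ k).toReal * y ^ k) := by
    intro k
    have h1 : (a • x + b • y) ^ k ≤ a • x ^ k + b • y ^ k :=
      (convexOn_pow k).2 (Set.mem_Ici.mpr hx.1) (Set.mem_Ici.mpr hy.1) ha hb hab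
    simp only [smul_eq_mul] at h1 ⊢
    nlinarith [ENNReal.toReal_nonneg (a := μ k), mul_le_mul_of_nonneg_left h1
      (ENNReal.toReal_nonneg (a := μ k))]
  have hsum1 : Summable fun k : ℕ => a * ((μ k).toReal * x ^ k) :=
    (term_summable μ hx.1 hx.2).mul_left a
  have hsum2 : Summable fun k : ℕ => b * ((μ k).toReal * y ^ k) :=
    (term_summable μ hy.1 hy.2).mul_left b
  calc freal μ (a • x + b • y)
      ≤ ∑' k : ℕ, (a * ((μ k).toReal * x ^ k) + b * ((μ k).toReal * y ^ k)) :=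
        Summable.tsum_le_tsum hterm (term_summable μ hmem.1 hmem.2) (hsum1.add hsum2)
    _ = a * freal μ x + b * freal μ y := by
        rw [Summable.tsum_add hsum1 hsum2, tsum_mul_left, tsum_mul_left]; rfl
    _ = a • freal μ x + b • freal μ y := by simp [smul_eq_mul]

lemma slope_ineq (μ : PMF ℕ) {x y z : ℝ} (hx : 0 ≤ x) (hxy : x < y) (hyz : y < z) (hz : z ≤ 1) :
    (freal μ y - freal μ x) * (z - y) ≤ (freal μ z - freal μ y) * (y - x) := by
  have hxz : x < z := hxy.trans hyz
  have h := (freal_convex μ).slope_mono_adjacent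
    (Set.mem_Icc.mpr ⟨hx, (hxz.le.trans hz)⟩)
    (Set.mem_Icc.mpr ⟨hx.trans hxz.le, hz⟩) hxy hyz
  rw [div_le_div_iff₀ (by linarith) (by linarith)] at h
  linarith

lemma freal_dtv (μ₁ μ₂ : PMF ℕ) {x : ℝ} (hx0 : 0 ≤ x) (hx1 : x ≤ 1) :
    |freal μ₁ x - freal μ₂ x| ≤ 2 * dTV μ₁ μ₂ := by
  have hs1 := term_summable μ₁ hx0 hx1
  have hs2 := term_summable μ₂ hx0 hx1
  have habs : Summable (fun k : ℕ => |(μ₁ k).toReal - (μ₂ k).toReal|) := by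
    refine Summable.of_nonneg_of_le (fun k => abs_nonneg _) (fun k => ?_)
      ((psummable μ₁).add (psummable μ₂))
    calc |(μ₁ k).toReal - (μ₂ k).toReal| ≤ |(μ₁ k).toReal| + |(μ₂ k).toReal| := abs_sub _ _
      _ = (μ₁ k).toReal + (μ₂ k).toReal := by
          rw [abs_of_nonneg ENNReal.toReal_nonneg, abs_of_nonneg ENNReal.toReal_nonneg]
  have hdiff : freal μ₁ x - freal μ₂ x =
      ∑' k : ℕ, ((μ₁ k).toReal - (μ₂ k).toReal) * x ^ k := by
    rw [freal, freal, ← Summable.tsum_sub hs1 hs2]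
    exact tsum_congr fun k => (sub_mul _ _ _).symm
  have hxabs : |x| ≤ 1 := by rw [abs_of_nonneg hx0]; exact hx1
  have hsum3 : Summable (fun k : ℕ => |(μ₁ k).toReal - (μ₂ k).toReal| * |x| ^ k) := by
    refine Summable.of_nonneg_of_le (fun k => mul_nonneg (abs_nonneg _) (pow_nonneg (abs_nonneg _) k))
      (fun k => mul_le_of_le_one_right (abs_nonneg _) (pow_le_one₀ (abs_nonneg _) hxabs)) habs
  calc |freal μ₁ x - freal μ₂ x|
      ≤ ∑' k : ℕ, |(μ₁ k).toReal - (μ₂ k).toReal| * |x| ^ k := by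
        rw [hdiff]
        have h := norm_tsum_le_tsum_norm
          (f := fun k : ℕ => ((μ₁ k).toReal - (μ₂ k).toReal) * x ^ k)
          (by simpa [Real.norm_eq_abs, abs_mul, abs_pow] using hsum3)
        simpa [Real.norm_eq_abs, abs_mul, abs_pow] using h
    _ ≤ ∑' k : ℕ, |(μ₁ k).toReal - (μ₂ k).toReal| := by
        refine Summable.tsum_le_tsum (fun k => ?_) hsum3 habs
        exact mul_le_of_le_one_right (abs_nonneg _) (pow_le_one₀ (abs_nonneg _) hxabs)
    _ = 2 * dTV μ₁ μ₂ := by rw [dTV]; ring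

lemma tailMean_mono (μ : PMF ℕ) {l l' : ℕ} (h : l ≤ l') : tailMean μ l' ≤ tailMean μ l := by
  refine ENNReal.tsum_le_tsum fun k => ?_
  by_cases hk : l' ≤ k
  · rw [if_pos hk, if_pos (h.trans hk)]
  · rw [if_neg hk]; exact zero_le

lemma one_sub_pow_le {t : ℝ} (h0 : 0 ≤ t) (h1 : t ≤ 1) (k : ℕ) :
    (1 - t) ^ k ≤ 1 - t * k + t ^ 2 * (k:ℝ) ^ 2 / 2 := by
  induction k with
  | zero => simp
  | succ k ih =>
    have hnn : (0:ℝ) ≤ 1 - t := by linarith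
    have h2 : (1 - t) ^ (k + 1) ≤ (1 - t * k + t ^ 2 * (k:ℝ) ^ 2 / 2) * (1 - t) := by
      rw [pow_succ]
      exact mul_le_mul_of_nonneg_right ih hnn
    refine h2.trans ?_
    push_cast
    nlinarith [sq_nonneg t, sq_nonneg ((k:ℝ) * t), mul_nonneg h0 (Nat.cast_nonneg k),
      mul_nonneg (mul_nonneg h0 h0) (Nat.cast_nonneg k)]


lemma head_ge (μ : PMF ℕ) {l : ℕ} {η : ℝ} (hη : 0 < η) (hmfin : mMean μ < ⊤)
    (htail : tailMean μ l ≤ ENNReal.ofReal η) (hmean : 1 + 4 * η ≤ mReal μ) :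
    1 + 3 * η ≤ ∑ k ∈ Finset.range l, (k : ℝ) * (μ k).toReal := by
  have hsplit : mMean μ = (∑ k ∈ Finset.range l, (k : ℝ≥0∞) * μ k) + tailMean μ l := by
    rw [mMean, tailMean]
    have hpt : ∀ k : ℕ, (k : ℝ≥0∞) * μ k =
        (if k < l then (k : ℝ≥0∞) * μ k else 0) + (if l ≤ k then (k : ℝ≥0∞) * μ k else 0) := by
      intro k
      by_cases hk : k < l
      · rw [if_pos hk, if_neg (not_le.mpr hk), add_zero]
      · rw [if_neg hk, if_pos (not_lt.mp hk), zero_add]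
    rw [tsum_congr hpt, ENNReal.tsum_add]
    congr 1
    rw [tsum_eq_sum (s := Finset.range l) (fun k hk => if_neg (by simpa using hk))]
    exact Finset.sum_congr rfl fun k hk => if_pos (Finset.mem_range.mp hk)
  have hfin1 : (∑ k ∈ Finset.range l, (k : ℝ≥0∞) * μ k) ≠ ⊤ := by
    refine (lt_of_le_of_lt ?_ hmfin).ne
    rw [hsplit]; exact le_self_add
  have hfin2 : tailMean μ l ≠ ⊤ := (htail.trans_lt ENNReal.ofReal_lt_top).ne
  have htr := congrArg ENNReal.toReal hsplit
  rw [ENNReal.toReal_add hfin1 hfin2] at htr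
  have hsum : (∑ k ∈ Finset.range l, (k : ℝ≥0∞) * μ k).toReal =
      ∑ k ∈ Finset.range l, (k : ℝ) * (μ k).toReal := by
    rw [ENNReal.toReal_sum (fun k _ => ENNReal.mul_ne_top (ENNReal.natCast_ne_top k)
      (PMF.apply_ne_top μ k))]
    exact Finset.sum_congr rfl fun k _ => by rw [ENNReal.toReal_mul, ENNReal.toReal_natCast k]
  have htail' : (tailMean μ l).toReal ≤ η :=
    ENNReal.toReal_le_of_le_ofReal hη.le htail
  rw [hsum] at htr
  have : mReal μ = (∑ k ∈ Finset.range l, (k : ℝ) * (μ k).toReal) + (tailMean μ l).toReal := htr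
  linarith

lemma barrier (μ : PMF ℕ) {l : ℕ} {η t : ℝ} (hl : 1 ≤ l) (hη : 0 < η)
    (hmfin : mMean μ < ⊤) (htail : tailMean μ l ≤ ENNReal.ofReal η)
    (hmean : 1 + 4 * η ≤ mReal μ)
    (ht : t = min (1/2 : ℝ) (η / (l : ℝ) ^ 2)) :
    freal μ (1 - t) ≤ (1 - t) - min (t * η) 1 := by
  have hl0 : (0:ℝ) < (l : ℝ) ^ 2 := by
    have : (1:ℝ) ≤ (l : ℝ) := by exact_mod_cast hl
    nlinarith
  have ht0 : 0 < t := ht ▸ lt_min (by norm_num) (div_pos hη hl0)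
  have ht12 : t ≤ 1/2 := ht ▸ min_le_left _ _
  have htl : t * (l : ℝ) ^ 2 ≤ η := by
    have : t ≤ η / (l : ℝ) ^ 2 := ht ▸ min_le_right _ _
    calc t * (l:ℝ)^2 ≤ (η / (l:ℝ)^2) * (l:ℝ)^2 := by nlinarith
      _ = η := by field_simp
  set B := ∑ k ∈ Finset.range l, (k : ℝ) * (μ k).toReal with hB
  have hBge : 1 + 3 * η ≤ B := head_ge μ hη hmfin htail hmean
  set A := ∑ k ∈ Finset.range l, (μ k).toReal with hA
  have hA1 : A ≤ 1 := by
    rw [← psum_one μ]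
    exact Summable.sum_le_tsum (Finset.range l) (fun k _ => ENNReal.toReal_nonneg) (psummable μ)
  have hA0 : 0 ≤ A := Finset.sum_nonneg fun k _ => ENNReal.toReal_nonneg
  set c : ℝ := t ^ 2 * (l : ℝ) ^ 2 / 2 with hc
  have hc0 : 0 ≤ c := by positivity
  -- dominating sequence
  set g1 : ℕ → ℝ := fun k => if k < l then (μ k).toReal * (1 - t * k + c) else 0 with hg1
  set g2 : ℕ → ℝ := fun k => if k < l then 0 else (μ k).toReal with hg2
  have hg1sum : Summable g1 :=
    summable_of_ne_finset_zero (s := Finset.range l)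
      (fun k hk => if_neg (by simpa using hk))
  have hg2sum : Summable g2 := by
    refine Summable.of_nonneg_of_le (fun k => ?_) (fun k => ?_) (psummable μ)
    · by_cases hk : k < l
      · simp [hg2, hk]
      · simp [hg2, hk]
    · by_cases hk : k < l
      · simp [hg2, hk]
      · simp [hg2, hk]
  have hterm : ∀ k : ℕ, (μ k).toReal * (1 - t) ^ k ≤ g1 k + g2 k := by
    intro k
    by_cases hk : k < l
    · have h1 : (1 - t) ^ k ≤ 1 - t * k + t ^ 2 * (k:ℝ) ^ 2 / 2 :=
        one_sub_pow_le ht0.le (by linarith) k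
      have hkl : (k : ℝ) ≤ (l : ℝ) := by exact_mod_cast hk.le
      have hk0 : (0:ℝ) ≤ (k : ℝ) := Nat.cast_nonneg k
      have hsq : (k:ℝ) ^ 2 ≤ (l:ℝ) ^ 2 := by nlinarith
      have h2 : t ^ 2 * (k:ℝ) ^ 2 / 2 ≤ c := by
        rw [hc]
        have := mul_le_mul_of_nonneg_left hsq (sq_nonneg t)
        linarith
      simp only [hg1, hg2, if_pos hk, add_zero]
      refine mul_le_mul_of_nonneg_left (h1.trans (by linarith)) ENNReal.toReal_nonneg
    · have h1 : (1 - t) ^ k ≤ 1 := pow_le_one₀ (by linarith) (by linarith)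
      simp only [hg1, hg2, if_neg hk, zero_add]
      exact mul_le_of_le_one_right ENNReal.toReal_nonneg h1
  have hmain : freal μ (1 - t) ≤ ∑' k, (g1 k + g2 k) := by
    refine Summable.tsum_le_tsum hterm (term_summable μ (by linarith) (by linarith)) (hg1sum.add hg2sum)
  have hG1 : ∑' k, g1 k = A - t * B + c * A := by
    rw [tsum_eq_sum (s := Finset.range l) (fun k hk => if_neg (by simpa using hk))]
    have : ∀ k ∈ Finset.range l, g1 k = (μ k).toReal - t * ((k:ℝ) * (μ k).toReal)
        + c * (μ k).toReal := by
      intro k hk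
      rw [hg1]; simp only [if_pos (Finset.mem_range.mp hk)]; ring
    rw [Finset.sum_congr rfl this]
    rw [Finset.sum_add_distrib, Finset.sum_sub_distrib, ← Finset.mul_sum, ← Finset.mul_sum]
  have hG2 : ∑' k, g2 k = 1 - A := by
    have hpt : ∀ k : ℕ, g2 k = (μ k).toReal - (if k < l then (μ k).toReal else 0) := by
      intro k
      by_cases hk : k < l
      · simp [hg2, hk]
      · simp [hg2, hk]
    rw [tsum_congr hpt, Summable.tsum_sub (psummable μ)
      (summable_of_ne_finset_zero (s := Finset.range l) (fun k hk => if_neg (by simpa using hk))),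
      psum_one]
    congr 1
    rw [tsum_eq_sum (s := Finset.range l) (fun k hk => if_neg (by simpa using hk))]
    exact Finset.sum_congr rfl fun k hk => if_pos (Finset.mem_range.mp hk)
  rw [Summable.tsum_add hg1sum hg2sum, hG1, hG2] at hmain
  have hfinal : A - t * B + c * A + (1 - A) ≤ (1 - t) - t * η := by
    have h1 : c * A ≤ t * η / 2 := by
      have : c ≤ t * η / 2 := by rw [hc]; nlinarith
      nlinarith
    nlinarith
  have : min (t * η) 1 ≤ t * η := min_le_left _ _
  linarith


/-- One-step contraction near the barrier. -/
lemma step {f : ℝ → ℝ} {s γ δ a b : ℝ}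
    (hmono : ∀ x y : ℝ, 0 ≤ x → x ≤ y → y ≤ 1 → f x ≤ f y)
    (hslope : ∀ x y z : ℝ, 0 ≤ x → x < y → y < z → z ≤ 1 →
      (f y - f x) * (z - y) ≤ (f z - f y) * (y - x))
    (hs1 : s ≤ 1) (hγ0 : 0 < γ) (hγ1 : γ ≤ 1) (hbar : f s ≤ s - γ)
    (ha0 : 0 ≤ a) (has : a ≤ s) (hb0 : 0 ≤ b) (hbs : b ≤ s)
    (hfa : a ≤ f a) (hδ0 : 0 ≤ δ) (hδγ : 4 * δ ≤ γ) (hfb : b - 2 * δ ≤ f b) :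
    |f a - f b| ≤ (1 - γ / 2) * |a - b| := by
  rcases lt_trichotomy a b with hab | hab | hab
  · -- a < b
    have hfab : f a ≤ f b := hmono a b ha0 hab.le (hbs.trans hs1)
    rw [abs_of_nonpos (by linarith), abs_of_neg (by linarith)]
    rcases eq_or_lt_of_le hbs with hbs' | hbs'
    · -- b = s
      have h1 : f b ≤ s - γ := hbs' ▸ hbar
      have hba1 : b - a ≤ 1 := by linarith [hbs.trans hs1]
      nlinarith
    · -- b < s
      have h := hslope a b s ha0 hab hbs' hs1
      have hu0 : 0 < s - b := by linarith
      have hu1 : s - b ≤ 1 := by linarith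
      have h2 : (f b - f a) * (s - b) ≤ ((s - b) - (γ - 2 * δ)) * (b - a) := by
        refine h.trans ?_
        have : f s - f b ≤ (s - b) - (γ - 2 * δ) := by linarith
        nlinarith
      have hhalf : (s - b) * (γ / 2) ≤ γ / 2 := by
        have := mul_le_mul_of_nonneg_right hu1 (by linarith : (0:ℝ) ≤ γ / 2)
        linarith
      have key : 0 ≤ (b - a) * ((γ - 2 * δ) - (s - b) * (γ / 2)) :=
        mul_nonneg (by linarith) (by linarith)
      have expand : (1 - γ / 2) * (b - a) * (s - b) - ((s - b) - (γ - 2 * δ)) * (b - a) =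
          (b - a) * ((γ - 2 * δ) - (s - b) * (γ / 2)) := by ring
      have h3 : ((s - b) - (γ - 2 * δ)) * (b - a) ≤ ((1 - γ / 2) * (b - a)) * (s - b) := by
        nlinarith [key, expand]
      have h4 : (f b - f a) * (s - b) ≤ ((1 - γ / 2) * (b - a)) * (s - b) := h2.trans h3
      have := (mul_le_mul_iff_of_pos_right hu0).mp h4
      linarith
  · simp [hab]
  · -- b < a
    have hfab : f b ≤ f a := hmono b a hb0 hab.le (has.trans hs1)
    rw [abs_of_nonneg (by linarith), abs_of_pos (by linarith)]
    rcases eq_or_lt_of_le has with has' | has'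
    · -- a = s
      have h1 : f a ≤ s - γ := has' ▸ hbar
      have hab1 : a - b ≤ 1 := by linarith [has.trans hs1]
      nlinarith
    · -- a < s
      have h := hslope b a s hb0 hab has' hs1
      have hu0 : 0 < s - a := by linarith
      have hu1 : s - a ≤ 1 := by linarith
      have h2 : (f a - f b) * (s - a) ≤ ((s - a) - γ) * (a - b) := by
        refine h.trans ?_
        have : f s - f a ≤ (s - a) - γ := by linarith
        nlinarith
      have hhalf : (s - a) * (γ / 2) ≤ γ / 2 := by
        have := mul_le_mul_of_nonneg_right hu1 (by linarith : (0:ℝ) ≤ γ / 2)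
        linarith
      have key : 0 ≤ (a - b) * (γ - (s - a) * (γ / 2)) :=
        mul_nonneg (by linarith) (by linarith)
      have expand : (1 - γ / 2) * (a - b) * (s - a) - ((s - a) - γ) * (a - b) =
          (a - b) * (γ - (s - a) * (γ / 2)) := by ring
      have h3 : ((s - a) - γ) * (a - b) ≤ ((1 - γ / 2) * (a - b)) * (s - a) := by
        nlinarith [key, expand]
      have h4 : (f a - f b) * (s - a) ≤ ((1 - γ / 2) * (a - b)) * (s - a) := h2.trans h3
      have := (mul_le_mul_iff_of_pos_right hu0).mp h4
      linarith

end Analytic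

end GWaux


end

/-- Lemma 3.4(ii): uniform continuity, uniformly in `n`, of `μ ↦ ℙ^μ[Z_n = 0]`
on a uniformly ψ₁-integrating set with `inf_{μ∈𝒩} m_μ > 1`. -/
theorem extinction_time_n_uniformly_continuous
    (P : PMF ℕ → Measure GWOmega) (hP : ∀ μ, IsGWMeasure (P μ) μ)
    (N : Set (PMF ℕ)) (hN : N ⊆ N11) (hint : UnifIntegrating N)
    (hm : ∃ m₀ > (1 : ℝ), ∀ μ ∈ N, m₀ ≤ mReal μ) :
    ∀ ε > (0 : ℝ), ∃ δ > (0 : ℝ), ∀ μ₁ ∈ N, ∀ μ₂ ∈ N, dTV μ₁ μ₂ ≤ δ →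
      ∀ n : ℕ, 1 ≤ n →
        |(P μ₁ {ω | Z n ω = 0}).toReal - (P μ₂ {ω | Z n ω = 0}).toReal| ≤ ε := by
  intro ε hε
  obtain ⟨m₀, hm₀, hmN⟩ := hm
  set η : ℝ := (m₀ - 1) / 4 with hηdef
  have hη : 0 < η := by rw [hηdef]; linarith
  obtain ⟨ℓ₀, hℓ₀⟩ := hint η hη
  set l : ℕ := max ℓ₀ 1 with hldef
  have hl1 : 1 ≤ l := le_max_right _ _
  have htailN : ∀ μ' ∈ N, tailMean μ' l ≤ ENNReal.ofReal η := fun μ' hμ' =>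
    (GWaux.tailMean_mono μ' (le_max_left _ _)).trans (hℓ₀ μ' hμ')
  have hl0 : (0:ℝ) < (l : ℝ) ^ 2 := by
    have : (1:ℝ) ≤ (l : ℝ) := by exact_mod_cast hl1
    nlinarith
  set t : ℝ := min (1/2 : ℝ) (η / (l : ℝ) ^ 2) with htdef
  have ht0 : 0 < t := lt_min (by norm_num) (div_pos hη hl0)
  have ht12 : t ≤ 1/2 := min_le_left _ _
  set γ : ℝ := min (t * η) 1 with hγdef
  have hγ0 : 0 < γ := lt_min (mul_pos ht0 hη) one_pos
  have hγ1 : γ ≤ 1 := min_le_right _ _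
  refine ⟨min (γ/8) (ε*γ/8), by positivity, ?_⟩
  set δ : ℝ := min (γ/8) (ε*γ/8) with hδdef
  intro μ₁ hμ₁ μ₂ hμ₂ hdtv n hn
  have hδ0 : 0 < δ := by positivity
  have hδγ : 4 * δ ≤ γ := by
    have : δ ≤ γ/8 := min_le_left _ _
    linarith
  -- barrier for both measures
  have hbar : ∀ μ' ∈ N, GWaux.freal μ' (1 - t) ≤ (1 - t) - γ := by
    intro μ' hμ'
    have h1 : mMean μ' < ⊤ := hN hμ'
    have h2 : 1 + 4 * η ≤ mReal μ' := by
      have := hmN μ' hμ'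
      rw [hηdef]; linarith
    exact GWaux.barrier μ' hl1 hη h1 (htailN μ' hμ') h2 htdef
  have hbar1 := hbar μ₁ hμ₁
  have hbar2 := hbar μ₂ hμ₂
  have hs0 : (0:ℝ) ≤ 1 - t := by linarith
  have hs1 : (1:ℝ) - t ≤ 1 := by linarith
  -- orbits stay below the barrier point
  have horb : ∀ μ' ∈ N, ∀ k : ℕ, GWaux.aa μ' k ≤ 1 - t := by
    intro μ' hμ' k
    induction k with
    | zero => rw [GWaux.aa_zero]; linarith
    | succ k ih =>
      rw [GWaux.aa_succ]
      calc GWaux.freal μ' (GWaux.aa μ' k) ≤ GWaux.freal μ' (1 - t) :=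
            GWaux.freal_mono (GWaux.aa_nonneg μ' k) ih hs1
        _ ≤ (1 - t) - γ := hbar μ' hμ'
        _ ≤ 1 - t := by linarith
  -- orbits are increasing
  have hmon : ∀ μ' ∈ N, ∀ k : ℕ, GWaux.aa μ' k ≤ GWaux.aa μ' (k + 1) := by
    intro μ' hμ' k
    induction k with
    | zero => rw [GWaux.aa_zero]; exact GWaux.aa_nonneg μ' 1
    | succ k ih =>
      rw [GWaux.aa_succ, GWaux.aa_succ]
      exact GWaux.freal_mono (GWaux.aa_nonneg μ' k) ih (GWaux.aa_le_one μ' (k+1))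
  -- the main contraction estimate
  have hkey : ∀ k : ℕ, |GWaux.aa μ₁ k - GWaux.aa μ₂ k| ≤ 4 * δ / γ := by
    intro k
    induction k with
    | zero => rw [GWaux.aa_zero, GWaux.aa_zero]; simp; positivity
    | succ k ih =>
      have ha0 := GWaux.aa_nonneg μ₁ k
      have hb0 := GWaux.aa_nonneg μ₂ k
      have has := horb μ₁ hμ₁ k
      have hbs := horb μ₂ hμ₂ k
      have hb1 : GWaux.aa μ₂ k ≤ 1 := GWaux.aa_le_one μ₂ k
      have hdtv2 : |GWaux.freal μ₁ (GWaux.aa μ₂ k) - GWaux.freal μ₂ (GWaux.aa μ₂ k)| ≤ 2 * δ := by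
        refine (GWaux.freal_dtv μ₁ μ₂ hb0 hb1).trans ?_
        linarith
      have hfa : GWaux.aa μ₁ k ≤ GWaux.freal μ₁ (GWaux.aa μ₁ k) := by
        rw [← GWaux.aa_succ]; exact hmon μ₁ hμ₁ k
      have hfb : GWaux.aa μ₂ k - 2 * δ ≤ GWaux.freal μ₁ (GWaux.aa μ₂ k) := by
        have h1 : GWaux.aa μ₂ k ≤ GWaux.freal μ₂ (GWaux.aa μ₂ k) := by
          rw [← GWaux.aa_succ]; exact hmon μ₂ hμ₂ k
        have h2 := abs_le.mp hdtv2
        linarith [h2.1]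
      have hstep := GWaux.step (f := GWaux.freal μ₁) (s := 1 - t) (γ := γ) (δ := δ)
        (fun x y hx hxy hy1 => GWaux.freal_mono hx hxy hy1)
        (fun x y z hx hxy hyz hz1 => GWaux.slope_ineq μ₁ hx hxy hyz hz1)
        hs1 hγ0 hγ1 hbar1 ha0 has hb0 hbs hfa hδ0.le hδγ hfb
      calc |GWaux.aa μ₁ (k+1) - GWaux.aa μ₂ (k+1)|
          = |GWaux.freal μ₁ (GWaux.aa μ₁ k) - GWaux.freal μ₂ (GWaux.aa μ₂ k)| := by
            rw [GWaux.aa_succ, GWaux.aa_succ]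
        _ ≤ |GWaux.freal μ₁ (GWaux.aa μ₁ k) - GWaux.freal μ₁ (GWaux.aa μ₂ k)| +
            |GWaux.freal μ₁ (GWaux.aa μ₂ k) - GWaux.freal μ₂ (GWaux.aa μ₂ k)| :=
            abs_sub_le _ _ _
        _ ≤ (1 - γ / 2) * |GWaux.aa μ₁ k - GWaux.aa μ₂ k| + 2 * δ := by
            exact add_le_add hstep hdtv2
        _ ≤ (1 - γ / 2) * (4 * δ / γ) + 2 * δ := by
            have hfac : (0:ℝ) ≤ 1 - γ / 2 := by linarith
            have := mul_le_mul_of_nonneg_left ih hfac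
            linarith
        _ = 4 * δ / γ := by field_simp; ring
  -- conclude
  rw [GWaux.extinct_toReal (hP μ₁) n, GWaux.extinct_toReal (hP μ₂) n]
  refine (hkey n).trans ?_
  have hδ2 : δ ≤ ε * γ / 8 := min_le_right _ _
  rw [div_le_iff₀ hγ0]
  nlinarith
end

section
/- For every μ₁, μ₂ ∈ 𝒩₁¹ and n ∈ ℕ one has d_TV^{(n)}(ℙ^{μ₁}∘(Z₁,...,Z_n)^{−1}, ℙ^{μ₂}∘(Z₁,...,Z_n)^{−1}) ≤ C_n(μ₁,μ₂)·d_TV(μ₁,μ₂), where C_n(μ₁,μ₂) := min{Σ_{i=1}^n m_{μ₁}^{i−1}, Σ_{i=1}^n m_{μ₂}^{i−1}}. -/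
open MeasureTheory ProbabilityTheory ENNReal Metric

noncomputable section GWAux

/-- ENNReal absolute difference. -/
def eD (x y : ℝ≥0∞) : ℝ≥0∞ := (x - y) + (y - x)

lemma eD_comm (x y : ℝ≥0∞) : eD x y = eD y x := add_comm _ _

@[simp] lemma eD_self (x : ℝ≥0∞) : eD x x = 0 := by simp [eD]

lemma eD_le_add (x y : ℝ≥0∞) : eD x y ≤ x + y :=
  add_le_add (tsub_le_self.trans le_rfl) (tsub_le_self.trans le_rfl)

lemma mul_tsub_le (a u v : ℝ≥0∞) : a * u - a * v ≤ a * (u - v) := by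
  rw [tsub_le_iff_right, ← mul_add]
  exact mul_le_mul_right (le_tsub_add) a

lemma tsub_mul_le (a b v : ℝ≥0∞) : a * v - b * v ≤ (a - b) * v := by
  rw [tsub_le_iff_right, ← add_mul]
  exact mul_le_mul_left (le_tsub_add) v

lemma eD_mul_le (a b u v : ℝ≥0∞) : eD (a * u) (b * v) ≤ a * eD u v + eD a b * v := by
  have h1 : a * u - b * v ≤ a * (u - v) + (a - b) * v :=
    tsub_le_tsub_add_tsub.trans (add_le_add (mul_tsub_le a u v) (tsub_mul_le a b v))
  have h2 : b * v - a * u ≤ (b - a) * v + a * (v - u) :=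
    (tsub_le_tsub_add_tsub (b := a * v)).trans
      (add_le_add (tsub_mul_le b a v) (mul_tsub_le a v u))
  calc eD (a * u) (b * v) ≤ (a * (u - v) + (a - b) * v) + ((b - a) * v + a * (v - u)) :=
        add_le_add h1 h2
    _ = a * eD u v + eD a b * v := by simp [eD, mul_add, add_mul]; ring

lemma eD_tsum_le {ι : Type*} (f g : ι → ℝ≥0∞) :
    eD (∑' i, f i) (∑' i, g i) ≤ ∑' i, eD (f i) (g i) := by
  have key : ∀ (f g : ι → ℝ≥0∞), (∑' i, f i) - (∑' i, g i) ≤ ∑' i, (f i - g i) := by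
    intro f g
    rw [tsub_le_iff_right, ← ENNReal.tsum_add]
    exact ENNReal.tsum_le_tsum fun i => le_tsub_add
  calc eD (∑' i, f i) (∑' i, g i)
      ≤ (∑' i, (f i - g i)) + (∑' i, (g i - f i)) := add_le_add (key f g) (key g f)
    _ = ∑' i, eD (f i) (g i) := (ENNReal.tsum_add).symm

lemma eD_toReal (x y : ℝ≥0∞) (hx : x ≠ ∞) (hy : y ≠ ∞) :
    (eD x y).toReal = |x.toReal - y.toReal| := by
  rcases le_total x y with h | h
  · have : x - y = 0 := tsub_eq_zero_of_le h
    rw [eD, this, zero_add, ENNReal.toReal_sub_of_le h hy, abs_sub_comm,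
      abs_of_nonneg (sub_nonneg.2 (ENNReal.toReal_mono hy h))]
  · have : y - x = 0 := tsub_eq_zero_of_le h
    rw [eD, this, add_zero, ENNReal.toReal_sub_of_le h hx,
      abs_of_nonneg (sub_nonneg.2 (ENNReal.toReal_mono hx h))]

@[simp] lemma eD_ite (c : Prop) [Decidable c] (x y : ℝ≥0∞) :
    eD (if c then x else 0) (if c then y else 0) = if c then eD x y else 0 := by
  by_cases h : c <;> simp [h]

/-- tsum over a finite dependent product of a product equals product of tsums (in ℝ≥0∞). -/
lemma tsum_pi_prod : ∀ (n : ℕ) (β : Fin n → Type) (h : ∀ i, β i → ℝ≥0∞),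
    ∑' g : (∀ i, β i), ∏ i, h i (g i) = ∏ i, ∑' b, h i b := by
  intro n
  induction n with
  | zero =>
    intro β h
    rw [tsum_eq_single (fun i => i.elim0) (fun b hb => absurd (Subsingleton.elim b _) hb)]
    simp
  | succ n ih =>
    intro β h
    rw [← Equiv.tsum_eq (Fin.consEquiv β)]
    have : ∀ p : β 0 × (∀ i : Fin n, β i.succ),
        ∏ i, h i ((Fin.consEquiv β) p i) = h 0 p.1 * ∏ i : Fin n, h i.succ (p.2 i) := by
      intro p
      rw [Fin.prod_univ_succ]
      simp [Fin.consEquiv]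
    rw [tsum_congr this, ENNReal.tsum_prod']
    simp_rw [ENNReal.tsum_mul_left (a := h 0 _), ENNReal.tsum_mul_right]
    rw [Fin.prod_univ_succ]
    exact congrArg _ (ih _ _)

end GWAux

noncomputable section GWConv

/-- z-fold convolution weight: probability that the sum of `a` iid `μ`-draws is `b`. -/
def conv (μ : PMF ℕ) (a b : ℕ) : ℝ≥0∞ :=
  ∑' f : Fin a → ℕ, if (∑ i, f i) = b then ∏ i, μ (f i) else 0

lemma conv_zero (μ : PMF ℕ) (b : ℕ) : conv μ 0 b = if 0 = b then 1 else 0 := by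
  rw [conv, tsum_eq_single (fun i => i.elim0) (fun c hc => absurd (Subsingleton.elim c _) hc)]
  simp

lemma conv_mass (μ : PMF ℕ) (a : ℕ) : ∑' b, conv μ a b = 1 := by
  simp only [conv]
  rw [ENNReal.tsum_comm (f := fun b (f : Fin a → ℕ) => if (∑ i, f i) = b then ∏ i, μ (f i) else 0)]
  have : ∀ f : Fin a → ℕ, (∑' b, if (∑ i, f i) = b then ∏ i, μ (f i) else 0) = ∏ i, μ (f i) := by
    intro f
    rw [tsum_eq_single (∑ i, f i) (by intro b hb; simp [Ne.symm hb])]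
    simp
  rw [tsum_congr this, tsum_pi_prod a (fun _ => ℕ) (fun _ v => μ v)]
  simp [PMF.tsum_coe]

lemma conv_mean (μ : PMF ℕ) (a : ℕ) :
    ∑' b : ℕ, (b : ℝ≥0∞) * conv μ a b = a * (∑' k : ℕ, (k : ℝ≥0∞) * μ k) := by
  have h1 : ∀ b : ℕ, (b : ℝ≥0∞) * conv μ a b
      = ∑' f : Fin a → ℕ, if (∑ i, f i) = b then (b : ℝ≥0∞) * ∏ i, μ (f i) else 0 := by
    intro b
    rw [conv, ← ENNReal.tsum_mul_left]
    exact tsum_congr fun f => by split <;> simp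
  rw [tsum_congr h1,
    ENNReal.tsum_comm (f := fun b (f : Fin a → ℕ) =>
      if (∑ i, f i) = b then (b : ℝ≥0∞) * ∏ i, μ (f i) else 0)]
  have h2 : ∀ f : Fin a → ℕ,
      (∑' b, if (∑ i, f i) = b then (b : ℝ≥0∞) * ∏ i, μ (f i) else 0)
        = ∑ i : Fin a, (f i : ℝ≥0∞) * ∏ j, μ (f j) := by
    intro f
    rw [tsum_eq_single (∑ i, f i) (by intro b hb; simp [Ne.symm hb])]
    simp [Finset.sum_mul, Nat.cast_sum]
  rw [tsum_congr h2, Summable.tsum_finsetSum (fun i _ => ENNReal.summable)]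
  have h3 : ∀ i : Fin a,
      (∑' f : Fin a → ℕ, (f i : ℝ≥0∞) * ∏ j, μ (f j)) = ∑' k : ℕ, (k : ℝ≥0∞) * μ k := by
    intro i
    have hsplit : ∀ f : Fin a → ℕ,
        (f i : ℝ≥0∞) * ∏ j, μ (f j) = ∏ j, (if j = i then (f j : ℝ≥0∞) else 1) * μ (f j) := by
      intro f
      rw [Finset.prod_mul_distrib, Finset.prod_ite_eq' Finset.univ i (fun j => ((f j : ℝ≥0∞)))]
      simp
    rw [tsum_congr hsplit,
      tsum_pi_prod a (fun _ => ℕ) (fun j v => (if j = i then (v : ℝ≥0∞) else 1) * μ v)]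
    calc (∏ j : Fin a, ∑' v : ℕ, (if j = i then (v : ℝ≥0∞) else 1) * μ v)
        = ∏ j : Fin a, (if j = i then ∑' v : ℕ, (v : ℝ≥0∞) * μ v else 1) := by
          refine Finset.prod_congr rfl fun j _ => ?_
          split <;> simp [PMF.tsum_coe]
      _ = ∑' k : ℕ, (k : ℝ≥0∞) * μ k := by
          rw [Finset.prod_ite_eq' Finset.univ i (fun _ => ∑' v : ℕ, (v : ℝ≥0∞) * μ v)]
          simp
  rw [Finset.sum_congr rfl (fun i _ => h3 i)]
  simp [mul_comm]

lemma conv_succ (μ : PMF ℕ) (a b : ℕ) :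
    conv μ (a + 1) b
      = ∑' jc : ℕ × ℕ, if jc.1 + jc.2 = b then μ jc.1 * conv μ a jc.2 else 0 := by
  have hR : ∀ jc : ℕ × ℕ, (if jc.1 + jc.2 = b then μ jc.1 * conv μ a jc.2 else 0)
      = ∑' f : Fin a → ℕ,
          if jc.1 + jc.2 = b ∧ (∑ i, f i) = jc.2 then μ jc.1 * ∏ i, μ (f i) else 0 := by
    intro jc
    by_cases h : jc.1 + jc.2 = b
    · rw [if_pos h, conv, ← ENNReal.tsum_mul_left]
      exact tsum_congr fun f => by by_cases h2 : (∑ i, f i) = jc.2 <;> simp [h, h2]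
    · rw [if_neg h]
      symm
      simp [h]
  rw [tsum_congr hR, ENNReal.tsum_prod']
  have hcol : ∀ j : ℕ, (∑' (c : ℕ) (f : Fin a → ℕ),
      if j + c = b ∧ (∑ i, f i) = c then μ j * ∏ i, μ (f i) else 0)
      = ∑' f : Fin a → ℕ, if j + (∑ i, f i) = b then μ j * ∏ i, μ (f i) else 0 := by
    intro j
    rw [ENNReal.tsum_comm]
    refine tsum_congr fun f => ?_
    rw [tsum_eq_single (∑ i, f i) (by intro c hc; simp [Ne.symm hc])]
    simp
  rw [tsum_congr hcol]
  rw [conv, ← Equiv.tsum_eq (Fin.consEquiv (fun _ : Fin (a+1) => ℕ)), ENNReal.tsum_prod']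
  refine tsum_congr fun j => tsum_congr fun f => ?_
  have hs : (∑ i : Fin (a+1), (Fin.consEquiv (fun _ => ℕ)) (j, f) i) = j + ∑ i, f i := by
    simp [Fin.consEquiv, Fin.sum_univ_succ]
  have hp : (∏ i : Fin (a+1), μ ((Fin.consEquiv (fun _ => ℕ)) (j, f) i))
      = μ j * ∏ i, μ (f i) := by
    simp [Fin.consEquiv, Fin.prod_univ_succ]
  rw [hs, hp]

lemma conv_dist_le (μ₁ μ₂ : PMF ℕ) (a : ℕ) :
    ∑' b, eD (conv μ₁ a b) (conv μ₂ a b) ≤ (a : ℝ≥0∞) * ∑' k, eD (μ₁ k) (μ₂ k) := by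
  induction a with
  | zero => simp [conv_zero]
  | succ a ih =>
    simp_rw [conv_succ]
    have step1 : ∀ b : ℕ,
        eD (∑' jc : ℕ × ℕ, if jc.1 + jc.2 = b then μ₁ jc.1 * conv μ₁ a jc.2 else 0)
           (∑' jc : ℕ × ℕ, if jc.1 + jc.2 = b then μ₂ jc.1 * conv μ₂ a jc.2 else 0)
        ≤ ∑' jc : ℕ × ℕ, if jc.1 + jc.2 = b then
            μ₁ jc.1 * eD (conv μ₁ a jc.2) (conv μ₂ a jc.2)
              + eD (μ₁ jc.1) (μ₂ jc.1) * conv μ₂ a jc.2 else 0 := by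
      intro b
      refine (eD_tsum_le _ _).trans (ENNReal.tsum_le_tsum fun jc => ?_)
      rw [eD_ite]
      split
      · exact eD_mul_le _ _ _ _
      · exact le_rfl
    refine (ENNReal.tsum_le_tsum step1).trans ?_
    rw [ENNReal.tsum_comm (f := fun b (jc : ℕ × ℕ) => if jc.1 + jc.2 = b then
      μ₁ jc.1 * eD (conv μ₁ a jc.2) (conv μ₂ a jc.2)
        + eD (μ₁ jc.1) (μ₂ jc.1) * conv μ₂ a jc.2 else 0)]
    have hcol : ∀ jc : ℕ × ℕ, (∑' b, if jc.1 + jc.2 = b then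
        μ₁ jc.1 * eD (conv μ₁ a jc.2) (conv μ₂ a jc.2)
          + eD (μ₁ jc.1) (μ₂ jc.1) * conv μ₂ a jc.2 else 0)
        = μ₁ jc.1 * eD (conv μ₁ a jc.2) (conv μ₂ a jc.2)
          + eD (μ₁ jc.1) (μ₂ jc.1) * conv μ₂ a jc.2 := by
      intro jc
      rw [tsum_eq_single (jc.1 + jc.2) (by intro b hb; simp [Ne.symm hb])]
      simp
    rw [tsum_congr hcol, ENNReal.tsum_prod', tsum_congr (fun j => ENNReal.tsum_add),
      ENNReal.tsum_add]
    simp_rw [ENNReal.tsum_mul_left, ENNReal.tsum_mul_right, conv_mass, PMF.tsum_coe, one_mul,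
      mul_one]
    have hcast : ((a + 1 : ℕ) : ℝ≥0∞) * (∑' k, eD (μ₁ k) (μ₂ k))
        = (a : ℝ≥0∞) * (∑' k, eD (μ₁ k) (μ₂ k)) + ∑' k, eD (μ₁ k) (μ₂ k) := by
      push_cast; ring
    rw [hcast]
    exact add_le_add ih le_rfl

end GWConv

noncomputable section GWG

/-- The trajectory `1, x 0, x 1, ...` extended by junk. -/
def zseq (n : ℕ) (x : Fin n → ℕ) : ℕ → ℕ
  | 0 => 1
  | k + 1 => if h : k < n then x ⟨k, h⟩ else 0

/-- Candidate law of `(Z 1, …, Z n)`. -/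
def Gfn (μ : PMF ℕ) (n : ℕ) (x : Fin n → ℕ) : ℝ≥0∞ :=
  ∏ k ∈ Finset.range n, conv μ (zseq n x k) (zseq n x (k + 1))

lemma zseq_snoc (n : ℕ) (y : Fin n → ℕ) (b : ℕ) {k : ℕ} (hk : k ≤ n) :
    zseq (n + 1) (Fin.snoc y b) k = zseq n y k := by
  cases k with
  | zero => rfl
  | succ k =>
    have hk' : k < n := hk
    simp only [zseq]
    rw [dif_pos (Nat.lt_succ_of_lt hk'), dif_pos hk']
    have h2 : (⟨k, Nat.lt_succ_of_lt hk'⟩ : Fin (n + 1)) = Fin.castSucc ⟨k, hk'⟩ := rfl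
    rw [h2, Fin.snoc_castSucc]

lemma zseq_snoc_last (n : ℕ) (y : Fin n → ℕ) (b : ℕ) :
    zseq (n + 1) (Fin.snoc y b) (n + 1) = b := by
  have : (⟨n, Nat.lt_succ_self n⟩ : Fin (n + 1)) = Fin.last n := rfl
  simp [zseq, this, Fin.snoc_last]

lemma Gfn_snoc (μ : PMF ℕ) (n : ℕ) (y : Fin n → ℕ) (b : ℕ) :
    Gfn μ (n + 1) (Fin.snoc y b) = Gfn μ n y * conv μ (zseq n y n) b := by
  rw [Gfn, Finset.prod_range_succ, Gfn]
  congr 1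
  · refine Finset.prod_congr rfl fun k hk => ?_
    have hk' : k < n := Finset.mem_range.mp hk
    rw [zseq_snoc n y b hk'.le, zseq_snoc n y b hk']
  · rw [zseq_snoc n y b le_rfl, zseq_snoc_last]

/-- The snoc equivalence for plain tuples. -/
def snocE (n : ℕ) : ℕ × (Fin n → ℕ) ≃ (Fin (n + 1) → ℕ) := Fin.snocEquiv (fun _ => ℕ)

lemma snocE_apply (n : ℕ) (p : ℕ × (Fin n → ℕ)) : snocE n p = Fin.snoc p.2 p.1 := rfl

lemma Gfn_mass (μ : PMF ℕ) (n : ℕ) : ∑' x : Fin n → ℕ, Gfn μ n x = 1 := by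
  induction n with
  | zero =>
    rw [tsum_eq_single (fun i => i.elim0) (fun c hc => absurd (Subsingleton.elim c _) hc)]
    simp [Gfn]
  | succ n ih =>
    rw [← Equiv.tsum_eq (snocE n)]
    have : ∀ p : ℕ × (Fin n → ℕ),
        Gfn μ (n + 1) (snocE n p) = Gfn μ n p.2 * conv μ (zseq n p.2 n) p.1 := by
      intro p; rw [snocE_apply, Gfn_snoc]
    rw [tsum_congr this, ENNReal.tsum_prod', ENNReal.tsum_comm]
    simp_rw [ENNReal.tsum_mul_left, conv_mass, mul_one]
    exact ih

lemma Gfn_mean (μ : PMF ℕ) (n : ℕ) :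
    ∑' x : Fin n → ℕ, Gfn μ n x * (zseq n x n : ℝ≥0∞)
      = (∑' k : ℕ, (k : ℝ≥0∞) * μ k) ^ n := by
  induction n with
  | zero =>
    rw [tsum_eq_single (fun i => i.elim0) (fun c hc => absurd (Subsingleton.elim c _) hc)]
    simp [Gfn, zseq]
  | succ n ih =>
    rw [← Equiv.tsum_eq (snocE n)]
    have : ∀ p : ℕ × (Fin n → ℕ),
        Gfn μ (n + 1) (snocE n p) * (zseq (n + 1) (snocE n p) (n + 1) : ℝ≥0∞)
          = Gfn μ n p.2 * ((p.1 : ℝ≥0∞) * conv μ (zseq n p.2 n) p.1) := by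
      intro p
      rw [snocE_apply, Gfn_snoc, zseq_snoc_last]
      ring
    rw [tsum_congr this, ENNReal.tsum_prod', ENNReal.tsum_comm]
    simp_rw [ENNReal.tsum_mul_left, conv_mean]
    have : ∀ y : Fin n → ℕ,
        Gfn μ n y * ((zseq n y n : ℝ≥0∞) * (∑' k : ℕ, (k : ℝ≥0∞) * μ k))
          = (Gfn μ n y * (zseq n y n : ℝ≥0∞)) * (∑' k : ℕ, (k : ℝ≥0∞) * μ k) := by
      intro y; ring
    rw [tsum_congr this, ENNReal.tsum_mul_right, ih, pow_succ]

lemma Gfn_dist_le (μ₁ μ₂ : PMF ℕ) (n : ℕ) :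
    ∑' x : Fin n → ℕ, eD (Gfn μ₁ n x) (Gfn μ₂ n x)
      ≤ (∑ i ∈ Finset.range n, (∑' k : ℕ, (k : ℝ≥0∞) * μ₁ k) ^ i)
        * ∑' k, eD (μ₁ k) (μ₂ k) := by
  induction n with
  | zero =>
    rw [tsum_eq_single (fun i => i.elim0) (fun c hc => absurd (Subsingleton.elim c _) hc)]
    simp [Gfn]
  | succ n ih =>
    rw [← Equiv.tsum_eq (snocE n)]
    have hterm : ∀ p : ℕ × (Fin n → ℕ),
        eD (Gfn μ₁ (n + 1) (snocE n p)) (Gfn μ₂ (n + 1) (snocE n p))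
          ≤ Gfn μ₁ n p.2 * eD (conv μ₁ (zseq n p.2 n) p.1) (conv μ₂ (zseq n p.2 n) p.1)
            + eD (Gfn μ₁ n p.2) (Gfn μ₂ n p.2) * conv μ₂ (zseq n p.2 n) p.1 := by
      intro p
      rw [snocE_apply, Gfn_snoc, Gfn_snoc]
      exact eD_mul_le _ _ _ _
    refine (ENNReal.tsum_le_tsum hterm).trans ?_
    rw [ENNReal.tsum_prod', ENNReal.tsum_comm]
    simp_rw [ENNReal.tsum_add, ENNReal.tsum_mul_left, conv_mass, mul_one]
    have h1 : ∑' y : Fin n → ℕ,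
        Gfn μ₁ n y * ∑' b, eD (conv μ₁ (zseq n y n) b) (conv μ₂ (zseq n y n) b)
        ≤ (∑' k : ℕ, (k : ℝ≥0∞) * μ₁ k) ^ n * ∑' k, eD (μ₁ k) (μ₂ k) := by
      calc ∑' y : Fin n → ℕ,
            Gfn μ₁ n y * ∑' b, eD (conv μ₁ (zseq n y n) b) (conv μ₂ (zseq n y n) b)
          ≤ ∑' y : Fin n → ℕ,
            Gfn μ₁ n y * ((zseq n y n : ℝ≥0∞) * ∑' k, eD (μ₁ k) (μ₂ k)) :=
            ENNReal.tsum_le_tsum fun y =>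
              mul_le_mul_right (conv_dist_le μ₁ μ₂ (zseq n y n)) _
        _ = (∑' y : Fin n → ℕ, Gfn μ₁ n y * (zseq n y n : ℝ≥0∞))
              * ∑' k, eD (μ₁ k) (μ₂ k) := by
            rw [← ENNReal.tsum_mul_right]
            exact tsum_congr fun y => by ring
        _ = (∑' k : ℕ, (k : ℝ≥0∞) * μ₁ k) ^ n * ∑' k, eD (μ₁ k) (μ₂ k) := by
            rw [Gfn_mean]
    calc (∑' y : Fin n → ℕ,
          Gfn μ₁ n y * ∑' b, eD (conv μ₁ (zseq n y n) b) (conv μ₂ (zseq n y n) b))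
            + ∑' y : Fin n → ℕ, eD (Gfn μ₁ n y) (Gfn μ₂ n y)
        ≤ (∑' k : ℕ, (k : ℝ≥0∞) * μ₁ k) ^ n * (∑' k, eD (μ₁ k) (μ₂ k))
            + (∑ i ∈ Finset.range n, (∑' k : ℕ, (k : ℝ≥0∞) * μ₁ k) ^ i)
              * ∑' k, eD (μ₁ k) (μ₂ k) := add_le_add h1 ih
      _ = (∑ i ∈ Finset.range (n + 1), (∑' k : ℕ, (k : ℝ≥0∞) * μ₁ k) ^ i)
            * ∑' k, eD (μ₁ k) (μ₂ k) := by
          rw [Finset.sum_range_succ, add_mul, add_comm]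

end GWG

noncomputable section GWMeasure

lemma measurable_Z (n : ℕ) : Measurable (Z n) := by
  induction n with
  | zero => exact measurable_const
  | succ n ih =>
    apply measurable_to_countable'
    intro m
    have hset : (Z (n + 1)) ⁻¹' {m}
        = ⋃ a : ℕ, (Z n ⁻¹' {a}
            ∩ {ω : GWOmega | ∑ i ∈ Finset.range a, ω (n, i) = m}) := by
      ext ω
      simp only [Set.mem_preimage, Set.mem_singleton_iff, Set.mem_iUnion, Set.mem_inter_iff,
        Set.mem_setOf_eq]
      constructor
      · intro h; exact ⟨Z n ω, rfl, h⟩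
      · rintro ⟨a, ha, hsum⟩
        show (∑ i ∈ Finset.range (Z n ω), ω (n, i)) = m
        rw [ha]; exact hsum
    rw [hset]
    refine MeasurableSet.iUnion fun a => (ih (measurableSet_singleton a)).inter ?_
    exact (Finset.measurable_sum _ (fun i _ => measurable_pi_apply (n, i)))
      (measurableSet_singleton m)

lemma measurable_ZF (n : ℕ) : Measurable (fun ω : GWOmega => fun i : Fin n => Z (i + 1) ω) :=
  measurable_pi_lambda _ fun i => measurable_Z _

/-- The cylinder set prescribing the first `z k` offspring numbers in each generation `k < n`. -/
def Cyl (n : ℕ) (z : ℕ → ℕ) (g : ∀ k : Fin n, Fin (z k) → ℕ) : Set GWOmega :=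
  {ω | ∀ (k : Fin n) (i : Fin (z k)), ω (k, i) = g k i}

/-- The pieces of the decomposition of `{(Z 1, …, Z n) = (z 1, …, z n)}`. -/
def DSet (n : ℕ) (z : ℕ → ℕ) (g : ∀ k : Fin n, Fin (z k) → ℕ) : Set GWOmega :=
  if ∀ k : Fin n, (∑ i, g k i) = z (k + 1) then Cyl n z g else ∅

lemma measurableSet_Cyl (n : ℕ) (z : ℕ → ℕ) (g : ∀ k : Fin n, Fin (z k) → ℕ) :
    MeasurableSet (Cyl n z g) := by
  have : Cyl n z g = ⋂ (k : Fin n) (i : Fin (z k)),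
      (fun ω : GWOmega => ω (k, i)) ⁻¹' {g k i} := by
    ext ω; simp [Cyl]
  rw [this]
  exact MeasurableSet.iInter fun k => MeasurableSet.iInter fun i =>
    measurable_pi_apply _ (measurableSet_singleton _)

lemma measurableSet_DSet (n : ℕ) (z : ℕ → ℕ) (g : ∀ k : Fin n, Fin (z k) → ℕ) :
    MeasurableSet (DSet n z g) := by
  rw [DSet]
  split
  · exact measurableSet_Cyl n z g
  · exact MeasurableSet.empty

lemma DSet_disjoint (n : ℕ) (z : ℕ → ℕ) :
    Pairwise (Function.onFun Disjoint (DSet n z)) := by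
  intro g g' hgg'
  rw [Function.onFun, DSet, DSet]
  split
  · split
    · obtain ⟨k, hk⟩ := Function.ne_iff.mp hgg'
      obtain ⟨i, hi⟩ := Function.ne_iff.mp hk
      refine Set.disjoint_left.mpr fun ω hω hω' => hi ?_
      rw [← hω k i, ← hω' k i]
    · exact Set.disjoint_empty _
  · exact Set.empty_disjoint _

lemma measure_Cyl {P : Measure GWOmega} {μ : PMF ℕ} (hP : IsGWMeasure P μ)
    (n : ℕ) (z : ℕ → ℕ) (g : ∀ k : Fin n, Fin (z k) → ℕ) :
    P (Cyl n z g) = ∏ k : Fin n, ∏ i : Fin (z k), μ (g k i) := by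
  obtain ⟨hprob, hind, hmarg⟩ := hP
  classical
  set v : ℕ × ℕ → ℕ := fun p => if h : p.1 < n ∧ p.2 < z p.1
    then g ⟨p.1, h.1⟩ ⟨p.2, h.2⟩ else 0 with hv
  set S : Finset (ℕ × ℕ) :=
    (Finset.range n).biUnion (fun k => (Finset.range (z k)).image (fun i => (k, i))) with hS
  have hmemS : ∀ p : ℕ × ℕ, p ∈ S ↔ p.1 < n ∧ p.2 < z p.1 := by
    intro p
    simp only [hS, Finset.mem_biUnion, Finset.mem_range, Finset.mem_image]
    constructor
    · rintro ⟨k, hk, i, hi, rfl⟩; exact ⟨hk, hi⟩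
    · rintro ⟨h1, h2⟩; exact ⟨p.1, h1, p.2, h2, rfl⟩
  have hCyl : Cyl n z g = ⋂ p ∈ S, (fun ω : GWOmega => ω p) ⁻¹' {v p} := by
    ext ω
    simp only [Cyl, Set.mem_setOf_eq, Set.mem_iInter, Set.mem_preimage, Set.mem_singleton_iff]
    constructor
    · intro h p hp
      obtain ⟨h1, h2⟩ := (hmemS p).mp hp
      rw [hv]
      simp only [dif_pos (And.intro h1 h2)]
      have := h ⟨p.1, h1⟩ ⟨p.2, h2⟩
      simpa using this
    · intro h k i
      have hp : ((k : ℕ), (i : ℕ)) ∈ S := (hmemS _).mpr ⟨k.isLt, i.isLt⟩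
      have := h _ hp
      rw [hv] at this
      simp only [dif_pos (And.intro k.isLt i.isLt)] at this
      simpa using this
  have hmeas : P (Cyl n z g) = ∏ p ∈ S, P ((fun ω : GWOmega => ω p) ⁻¹' {v p}) := by
    rw [hCyl]
    exact hind.meas_biInter fun p _ => ⟨{v p}, measurableSet_singleton _, rfl⟩
  have heval : ∀ p : ℕ × ℕ, P ((fun ω : GWOmega => ω p) ⁻¹' {v p}) = μ (v p) := by
    intro p
    rw [← Measure.map_apply (measurable_pi_apply p) (measurableSet_singleton (v p)), hmarg p,
      PMF.toMeasure_apply_singleton _ _ (measurableSet_singleton (v p))]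
  rw [hmeas, Finset.prod_congr rfl fun p _ => heval p]
  -- now: ∏ p ∈ S, μ (v p) = ∏ k : Fin n, ∏ i : Fin (z k), μ (g k i)
  rw [hS, Finset.prod_biUnion]
  · have : ∀ k ∈ Finset.range n,
        (∏ p ∈ (Finset.range (z k)).image (fun i => (k, i)), μ (v p))
          = ∏ i ∈ Finset.range (z k), μ (v (k, i)) := by
      intro k _
      rw [Finset.prod_image]
      intro a _ b _ hab
      exact congrArg Prod.snd hab
    rw [Finset.prod_congr rfl this, ← Fin.prod_univ_eq_prod_range
      (fun k => ∏ i ∈ Finset.range (z k), μ (v (k, i))) n]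
    refine Finset.prod_congr rfl fun k _ => ?_
    rw [← Fin.prod_univ_eq_prod_range (fun i => μ (v (k, i))) (z k)]
    refine Finset.prod_congr rfl fun i _ => ?_
    rw [hv]
    simp only [dif_pos (And.intro k.isLt i.isLt)]
  · intro k hk k' hk' hkk'
    refine Finset.disjoint_left.mpr ?_
    rintro p hp hp'
    simp only [Finset.mem_image, Finset.mem_range] at hp hp'
    obtain ⟨i, hi, rfl⟩ := hp
    obtain ⟨i', hi', hp'⟩ := hp'
    exact hkk' (congrArg Prod.fst hp'.symm)

lemma law_eq {P : Measure GWOmega} {μ : PMF ℕ} (hP : IsGWMeasure P μ)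
    (n : ℕ) (x : Fin n → ℕ) :
    P {ω | ∀ i : Fin n, Z (i + 1) ω = x i} = Gfn μ n x := by
  classical
  set z := zseq n x with hzdef
  have hx : ∀ i : Fin n, x i = z (i + 1) := by
    intro i
    rw [hzdef]
    show x i = if h : (i : ℕ) < n then x ⟨i, h⟩ else 0
    rw [dif_pos i.isLt]
  have stepA : {ω : GWOmega | ∀ i : Fin n, Z (i + 1) ω = x i}
      = ⋂ k ∈ Finset.range n,
          {ω : GWOmega | ∑ i ∈ Finset.range (z k), ω (k, i) = z (k + 1)} := by
    ext ω
    simp only [Set.mem_setOf_eq, Set.mem_iInter, Finset.mem_range]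
    constructor
    · intro h k hk
      have hZ : ∀ m, m ≤ n → Z m ω = z m := by
        intro m hm
        cases m with
        | zero => rfl
        | succ m =>
          have hm' : m < n := hm
          rw [show Z (m + 1) ω = Z ((⟨m, hm'⟩ : Fin n) + 1) ω from rfl, h ⟨m, hm'⟩, hx ⟨m, hm'⟩]
      have : Z (k + 1) ω = z (k + 1) := hZ (k + 1) hk
      rw [← this, ← hZ k hk.le]
      rfl
    · intro h
      have hZ : ∀ m, m ≤ n → Z m ω = z m := by
        intro m
        induction m with
        | zero => intro _; rfl
        | succ m ih =>
          intro hm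
          have hm' : m < n := hm
          show (∑ i ∈ Finset.range (Z m ω), ω (m, i)) = z (m + 1)
          rw [ih hm'.le]
          exact h m hm'
      intro i
      rw [hx i]
      exact hZ (i + 1) i.isLt
  have stepB : (⋂ k ∈ Finset.range n,
        {ω : GWOmega | ∑ i ∈ Finset.range (z k), ω (k, i) = z (k + 1)})
      = ⋃ g : ∀ k : Fin n, Fin (z k) → ℕ, DSet n z g := by
    ext ω
    simp only [Set.mem_iInter, Finset.mem_range, Set.mem_iUnion, Set.mem_setOf_eq]
    constructor
    · intro h
      refine ⟨fun k i => ω (k, i), ?_⟩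
      have hcond : ∀ k : Fin n, (∑ i : Fin (z k), ω (k, i)) = z (k + 1) := by
        intro k
        rw [Fin.sum_univ_eq_sum_range (fun i => ω (k, i)) (z k)]
        exact h k k.isLt
      rw [DSet, if_pos hcond]
      exact fun k i => rfl
    · rintro ⟨g, hg⟩
      rw [DSet] at hg
      split at hg
      · rename_i hcond
        intro k hk
        have h1 := hcond ⟨k, hk⟩
        rw [← Fin.sum_univ_eq_sum_range (fun i => ω (k, i)) (z k)]
        rw [Finset.sum_congr rfl fun i _ => hg ⟨k, hk⟩ i]
        exact h1
      · exact absurd hg (Set.notMem_empty ω)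
  rw [stepA, stepB, measure_iUnion (DSet_disjoint n z) (measurableSet_DSet n z)]
  have hDval : ∀ g : ∀ k : Fin n, Fin (z k) → ℕ,
      P (DSet n z g) = ∏ k : Fin n,
        (if (∑ i, g k i) = z (k + 1) then ∏ i : Fin (z k), μ (g k i) else 0) := by
    intro g
    rw [DSet]
    split
    · rename_i hcond
      rw [measure_Cyl hP n z g]
      exact Finset.prod_congr rfl fun k _ => (if_pos (hcond k)).symm
    · rename_i hcond
      obtain ⟨k, hk⟩ := not_forall.mp hcond
      rw [measure_empty]
      symm
      apply Finset.prod_eq_zero (Finset.mem_univ k)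
      rw [if_neg hk]
  rw [tsum_congr hDval,
    tsum_pi_prod n (fun k => Fin (z k) → ℕ)
      (fun k f => if (∑ i, f i) = z (k + 1) then ∏ i : Fin (z k), μ (f i) else 0)]
  rw [Gfn, ← Fin.prod_univ_eq_prod_range (fun k => conv μ (z k) (z (k + 1))) n]
  rfl

lemma map_law {P : Measure GWOmega} {μ : PMF ℕ} (hP : IsGWMeasure P μ)
    (n : ℕ) (x : Fin n → ℕ) :
    (P.map (fun ω => fun i : Fin n => Z (i + 1) ω)) {x} = Gfn μ n x := by
  have hsing : MeasurableSet ({x} : Set (Fin n → ℕ)) := by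
    have : ({x} : Set (Fin n → ℕ)) = ⋂ i, (fun y : Fin n → ℕ => y i) ⁻¹' {x i} := by
      ext y
      simp [funext_iff]
    rw [this]
    exact MeasurableSet.iInter fun i => measurable_pi_apply i (measurableSet_singleton (x i))
  rw [Measure.map_apply (measurable_ZF n) hsing]
  have : (fun ω => fun i : Fin n => Z (i + 1) ω) ⁻¹' {x}
      = {ω | ∀ i : Fin n, Z (i + 1) ω = x i} := by
    ext ω
    simp [funext_iff]
  rw [this, law_eq hP n x]

end GWMeasure

noncomputable section GWFinal

lemma eD_ne_top' {x y : ℝ≥0∞} (hx : x ≠ ∞) (hy : y ≠ ∞) : eD x y ≠ ∞ :=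
  ne_top_of_le_ne_top (ENNReal.add_ne_top.mpr ⟨hx, hy⟩) (eD_le_add x y)

lemma Gfn_ne_top (μ : PMF ℕ) (n : ℕ) (x : Fin n → ℕ) : Gfn μ n x ≠ ∞ :=
  ne_top_of_le_ne_top ENNReal.one_ne_top ((ENNReal.le_tsum x).trans (Gfn_mass μ n).le)

lemma eDsum_ne_top (μ₁ μ₂ : PMF ℕ) : (∑' k, eD (μ₁ k) (μ₂ k)) ≠ ∞ := by
  have h2 : (∑' k, eD (μ₁ k) (μ₂ k)) ≤ 2 := by
    calc (∑' k, eD (μ₁ k) (μ₂ k)) ≤ ∑' k, (μ₁ k + μ₂ k) :=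
          ENNReal.tsum_le_tsum fun k => eD_le_add _ _
      _ = 2 := by rw [ENNReal.tsum_add, PMF.tsum_coe, PMF.tsum_coe]; norm_num
  exact ne_top_of_le_ne_top (by norm_num) h2

lemma dTV_eq_eD (μ₁ μ₂ : PMF ℕ) :
    dTV μ₁ μ₂ = (1 / 2) * (∑' k, eD (μ₁ k) (μ₂ k)).toReal := by
  rw [dTV, ENNReal.tsum_toReal_eq
    (fun k => eD_ne_top' (μ₁.apply_ne_top k) (μ₂.apply_ne_top k))]
  congr 1
  exact tsum_congr fun k =>
    (eD_toReal _ _ (μ₁.apply_ne_top k) (μ₂.apply_ne_top k)).symm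

lemma dTV_comm' (μ₁ μ₂ : PMF ℕ) : dTV μ₁ μ₂ = dTV μ₂ μ₁ := by
  rw [dTV, dTV]
  congr 1
  exact tsum_congr fun k => abs_sub_comm _ _

lemma dTVmeas_comm {α : Type*} [MeasurableSpace α] (ν₁ ν₂ : Measure α) :
    dTVmeas ν₁ ν₂ = dTVmeas ν₂ ν₁ := by
  rw [dTVmeas, dTVmeas]
  congr 1
  exact tsum_congr fun x => abs_sub_comm _ _

lemma side_bound {P₁ P₂ : Measure GWOmega} {μ₁ μ₂ : PMF ℕ}
    (h1 : IsGWMeasure P₁ μ₁) (h2 : IsGWMeasure P₂ μ₂) (hm : mMean μ₁ ≠ ∞) (n : ℕ) :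
    dTVmeas (P₁.map (fun ω => fun i : Fin n => Z (i + 1) ω))
        (P₂.map (fun ω => fun i : Fin n => Z (i + 1) ω))
      ≤ (∑ i ∈ Finset.range n, mReal μ₁ ^ i) * dTV μ₁ μ₂ := by
  have hM : mMean μ₁ = ∑' k : ℕ, (k : ℝ≥0∞) * μ₁ k := rfl
  have hstep : dTVmeas (P₁.map (fun ω => fun i : Fin n => Z (i + 1) ω))
      (P₂.map (fun ω => fun i : Fin n => Z (i + 1) ω))
      = (1 / 2) * (∑' x : Fin n → ℕ, eD (Gfn μ₁ n x) (Gfn μ₂ n x)).toReal := by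
    rw [dTVmeas, ENNReal.tsum_toReal_eq
      (fun x => eD_ne_top' (Gfn_ne_top μ₁ n x) (Gfn_ne_top μ₂ n x))]
    congr 1
    refine tsum_congr fun x => ?_
    rw [map_law h1 n x, map_law h2 n x,
      eD_toReal _ _ (Gfn_ne_top μ₁ n x) (Gfn_ne_top μ₂ n x)]
  have key := Gfn_dist_le μ₁ μ₂ n
  rw [← hM] at key
  have hRne : (∑ i ∈ Finset.range n, mMean μ₁ ^ i) * (∑' k, eD (μ₁ k) (μ₂ k)) ≠ ∞ := by
    refine ENNReal.mul_ne_top ?_ (eDsum_ne_top μ₁ μ₂)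
    exact (ENNReal.sum_lt_top.mpr fun i _ => ENNReal.pow_lt_top hm.lt_top).ne
  calc dTVmeas (P₁.map (fun ω => fun i : Fin n => Z (i + 1) ω))
        (P₂.map (fun ω => fun i : Fin n => Z (i + 1) ω))
      = (1 / 2) * (∑' x : Fin n → ℕ, eD (Gfn μ₁ n x) (Gfn μ₂ n x)).toReal := hstep
    _ ≤ (1 / 2) * ((∑ i ∈ Finset.range n, mMean μ₁ ^ i)
          * (∑' k, eD (μ₁ k) (μ₂ k))).toReal := by
        have := ENNReal.toReal_mono hRne key
        linarith
    _ = (1 / 2) * ((∑ i ∈ Finset.range n, mReal μ₁ ^ i)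
          * (∑' k, eD (μ₁ k) (μ₂ k)).toReal) := by
        rw [ENNReal.toReal_mul, ENNReal.toReal_sum (fun i _ => ENNReal.pow_ne_top hm)]
        simp_rw [ENNReal.toReal_pow]
        rfl
    _ = (∑ i ∈ Finset.range n, mReal μ₁ ^ i)
          * ((1 / 2) * (∑' k, eD (μ₁ k) (μ₂ k)).toReal) := by ring
    _ = (∑ i ∈ Finset.range n, mReal μ₁ ^ i) * dTV μ₁ μ₂ := by rw [dTV_eq_eD]

end GWFinal

/-- Lemma 3.5: the total variation distance between the laws of `(Z₁,…,Z_n)`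
under `ℙ^{μ₁}` and `ℙ^{μ₂}` is bounded by `C_n(μ₁,μ₂)·d_TV(μ₁,μ₂)` with
`C_n(μ₁,μ₂) = min{∑_{i=1}^n m_{μ₁}^{i-1}, ∑_{i=1}^n m_{μ₂}^{i-1}}`. -/
theorem joint_law_tv_bound
    (P : PMF ℕ → Measure GWOmega) (hP : ∀ μ, IsGWMeasure (P μ) μ) :
    ∀ μ₁ ∈ N11, ∀ μ₂ ∈ N11, ∀ n : ℕ, 1 ≤ n →
      dTVmeas ((P μ₁).map (fun ω => fun i : Fin n => Z (i + 1) ω))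
          ((P μ₂).map (fun ω => fun i : Fin n => Z (i + 1) ω))
        ≤ min (∑ i ∈ Finset.range n, mReal μ₁ ^ i)
            (∑ i ∈ Finset.range n, mReal μ₂ ^ i) * dTV μ₁ μ₂ := by
  intro μ₁ hμ₁ μ₂ hμ₂ n _
  have hm₁ : mMean μ₁ ≠ ⊤ := (lt_top_iff_ne_top.mp hμ₁)
  have hm₂ : mMean μ₂ ≠ ⊤ := (lt_top_iff_ne_top.mp hμ₂)
  have b1 := side_bound (hP μ₁) (hP μ₂) hm₁ n
  have b2 := side_bound (hP μ₂) (hP μ₁) hm₂ n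
  rcases le_total (∑ i ∈ Finset.range n, mReal μ₁ ^ i)
      (∑ i ∈ Finset.range n, mReal μ₂ ^ i) with h | h
  · rw [min_eq_left h]
    exact b1
  · rw [min_eq_right h]
    calc dTVmeas ((P μ₁).map (fun ω => fun i : Fin n => Z (i + 1) ω))
          ((P μ₂).map (fun ω => fun i : Fin n => Z (i + 1) ω))
        = dTVmeas ((P μ₂).map (fun ω => fun i : Fin n => Z (i + 1) ω))
          ((P μ₁).map (fun ω => fun i : Fin n => Z (i + 1) ω)) := dTVmeas_comm _ _
      _ ≤ (∑ i ∈ Finset.range n, mReal μ₂ ^ i) * dTV μ₂ μ₁ := b2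
      _ = (∑ i ∈ Finset.range n, mReal μ₂ ^ i) * dTV μ₁ μ₂ := by rw [dTV_comm']
end

section
/- Let 𝒩 ⊆ 𝒩₁¹ be a locally uniformly ψ₁-integrating set. Then for every μ₁ ∈ 𝒩, ε > 0, and η > 0 there exist δ > 0 and n₀ ∈ ℕ such that for all μ₂ ∈ 𝒩 with d_TV(μ₁,μ₂) ≤ δ and all n ≥ n₀ one has ℙ^{μ₂}[ |(1/n)Σ_{i=1}^n X_{0,i} − m_{μ₂}| ≥ η ] ≤ ε. -/
open MeasureTheory ProbabilityTheory ENNReal Metric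

/-- Lemma 3.6(i): a locally uniform weak law of large numbers for the
coordinate variables `X_{0,1}, …, X_{0,n}`. -/
theorem uniform_wlln_local
    (P : PMF ℕ → Measure GWOmega) (hP : ∀ μ, IsGWMeasure (P μ) μ)
    (N : Set (PMF ℕ)) (hN : N ⊆ N11) (hint : LocUnifIntegrating N) :
    ∀ μ₁ ∈ N, ∀ ε > (0 : ℝ), ∀ η > (0 : ℝ), ∃ δ > (0 : ℝ), ∃ n₀ : ℕ,
      ∀ μ₂ ∈ N, dTV μ₁ μ₂ ≤ δ → ∀ n, n₀ ≤ n →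
        P μ₂ {ω | η ≤ |(1 / (n : ℝ)) * (∑ i ∈ Finset.range n, (ω (0, i) : ℝ))
          - mReal μ₂|} ≤ ENNReal.ofReal ε := by

  intro μ₁ hμ₁ ε hε η hη
  set ε' : ℝ := min (η / 3) (ε * η / 6) with hε'def
  have hε'pos : (0 : ℝ) < ε' := lt_min (by linarith) (by positivity)
  have hε'1 : ε' ≤ η / 3 := min_le_left _ _
  have hε'2 : ε' ≤ ε * η / 6 := min_le_right _ _
  obtain ⟨δ, hδ, ℓ, hℓ⟩ := hint ε' hε'pos μ₁ hμ₁
  refine ⟨δ, hδ, max 1 ⌈18 * (ℓ : ℝ) ^ 2 / (ε * η ^ 2)⌉₊, ?_⟩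
  intro μ₂ hμ₂ hdist n hn
  obtain ⟨hprob, hindep, hlaw⟩ := hP μ₂
  haveI : IsProbabilityMeasure (P μ₂) := hprob
  have hn1 : 1 ≤ n := le_trans (le_max_left _ _) hn
  have hnR : (0 : ℝ) < n := by exact_mod_cast hn1
  have hnceil : 18 * (ℓ : ℝ) ^ 2 / (ε * η ^ 2) ≤ n := by
    calc 18 * (ℓ : ℝ) ^ 2 / (ε * η ^ 2) ≤ (⌈18 * (ℓ : ℝ) ^ 2 / (ε * η ^ 2)⌉₊ : ℝ) :=
          Nat.le_ceil _
      _ ≤ n := by exact_mod_cast le_trans (le_max_right _ _) hn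
  have h18 : 18 * (ℓ : ℝ) ^ 2 ≤ ε * η ^ 2 * n := by
    have hpos : (0 : ℝ) < ε * η ^ 2 := by positivity
    calc 18 * (ℓ : ℝ) ^ 2 = 18 * (ℓ : ℝ) ^ 2 / (ε * η ^ 2) * (ε * η ^ 2) := by
          field_simp
      _ ≤ n * (ε * η ^ 2) := by
          exact mul_le_mul_of_nonneg_right hnceil hpos.le
      _ = ε * η ^ 2 * n := by ring
  have htail : tailMean μ₂ ℓ ≤ ENNReal.ofReal ε' := hℓ μ₂ hμ₂ hdist
  -- the coordinate variables
  set X : ℕ → GWOmega → ℕ := fun i ω => ω (0, i) with hXdef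
  have hXmeas : ∀ i, Measurable (X i) := fun i => measurable_pi_apply _
  -- truncated part
  set g : ℕ → ℝ := fun k => if k < ℓ then (k : ℝ) else 0 with hgdef
  have hgmeas : Measurable g := measurable_from_nat
  have hgnn : ∀ k, 0 ≤ g k := by
    intro k; rw [hgdef]; dsimp only; split <;> simp
  have hgbd : ∀ k, |g k| ≤ (ℓ : ℝ) := by
    intro k; rw [hgdef]; dsimp only
    split
    · rw [abs_of_nonneg (Nat.cast_nonneg _)]
      exact_mod_cast Nat.le_of_lt ‹_›
    · simp
  set Y : ℕ → GWOmega → ℝ := fun i ω => g (X i ω) with hYdef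
  have hYmeas : ∀ i, Measurable (Y i) := fun i => hgmeas.comp (hXmeas i)
  have hYmem : ∀ i, MemLp (Y i) 2 (P μ₂) := by
    intro i
    refine MemLp.of_bound (hYmeas i).aestronglyMeasurable (ℓ : ℝ) ?_
    exact Filter.Eventually.of_forall fun ω => by
      simpa [Real.norm_eq_abs] using hgbd (X i ω)
  set EY : ℝ := ∫ k, g k ∂μ₂.toMeasure with hEYdef
  have hEYi : ∀ i, ∫ ω, Y i ω ∂P μ₂ = EY := by
    intro i
    rw [hEYdef, ← hlaw (0, i)]
    exact (integral_map (hXmeas i).aemeasurable hgmeas.aestronglyMeasurable).symm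
  -- variance bound for each Y i
  have hvar : ∀ i, variance (Y i) (P μ₂) ≤ (ℓ : ℝ) ^ 2 := by
    intro i
    refine (variance_le_expectation_sq (hYmeas i).aestronglyMeasurable).trans ?_
    have h1 : Integrable (Y i ^ 2) (P μ₂) := (hYmem i).integrable_sq
    calc ∫ ω, (Y i ^ 2) ω ∂P μ₂ ≤ ∫ _ω, (ℓ : ℝ) ^ 2 ∂P μ₂ := by
          refine integral_mono h1 (integrable_const _) fun ω => ?_
          have h2 := hgbd (X i ω)
          have h3 := abs_nonneg (g (X i ω))
          simp only [Pi.pow_apply, hYdef]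
          nlinarith [sq_abs (g (X i ω))]
      _ = (ℓ : ℝ) ^ 2 := by simp
  -- pairwise independence of the Y i
  have hpair : Set.Pairwise ↑(Finset.range n)
      (fun i j => IndepFun (Y i) (Y j) (P μ₂)) := by
    intro i _ j _ hij
    have hne : ((0 : ℕ), i) ≠ ((0 : ℕ), j) := by simpa using hij
    exact (hindep.indepFun hne).comp hgmeas hgmeas
  set W : GWOmega → ℝ := ∑ i ∈ Finset.range n, Y i with hWdef
  have hWmem : MemLp W 2 (P μ₂) := memLp_finset_sum' _ fun i _ => hYmem i
  have hWvar : variance W (P μ₂) ≤ (n : ℝ) * (ℓ : ℝ) ^ 2 := by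
    rw [hWdef, IndepFun.variance_sum (fun i _ => hYmem i) hpair]
    calc ∑ i ∈ Finset.range n, variance (Y i) (P μ₂)
        ≤ ∑ _i ∈ Finset.range n, (ℓ : ℝ) ^ 2 := Finset.sum_le_sum fun i _ => hvar i
      _ = (n : ℝ) * (ℓ : ℝ) ^ 2 := by simp [mul_comm]
  have hEW : ∫ ω, W ω ∂P μ₂ = (n : ℝ) * EY := by
    rw [hWdef]
    have : ∀ ω, (∑ i ∈ Finset.range n, Y i) ω = ∑ i ∈ Finset.range n, Y i ω := by
      intro ω; simp
    rw [integral_congr_ae (Filter.Eventually.of_forall this),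
      integral_finset_sum _ fun i _ => (hYmem i).integrable one_le_two]
    simp [hEYi, mul_comm]
  have hc : (0 : ℝ) < (n : ℝ) * η / 3 := by positivity
  -- Chebyshev bound
  have hA : P μ₂ {ω | (n : ℝ) * η / 3 ≤ |W ω - (n : ℝ) * EY|} ≤ ENNReal.ofReal (ε / 2) := by
    have hcheb := meas_ge_le_variance_div_sq (μ := P μ₂) hWmem hc
    rw [hEW] at hcheb
    refine hcheb.trans (ENNReal.ofReal_le_ofReal ?_)
    rw [div_le_iff₀ (by positivity)]
    nlinarith [hWvar, mul_nonneg (sub_nonneg.mpr h18) hnR.le]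
  -- tail part
  set te : ℕ → ℝ≥0∞ := fun k => if ℓ ≤ k then (k : ℝ≥0∞) else 0 with htedef
  have hteMeas : Measurable te := measurable_from_nat
  set Fe : GWOmega → ℝ≥0∞ := fun ω => ∑ i ∈ Finset.range n, te (X i ω) with hFedef
  have hFemeas : Measurable Fe := by
    apply Finset.measurable_sum
    exact fun i _ => hteMeas.comp (hXmeas i)
  have hte1 : ∀ i, ∫⁻ ω, te (X i ω) ∂P μ₂ = tailMean μ₂ ℓ := by
    intro i
    rw [← lintegral_map hteMeas (hXmeas i), hlaw, lintegral_countable']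
    unfold tailMean
    refine tsum_congr fun k => ?_
    rw [PMF.toMeasure_apply_singleton _ _ (measurableSet_singleton _)]
    rw [htedef]; dsimp only
    split <;> simp
  have hFeint : ∫⁻ ω, Fe ω ∂P μ₂ = (n : ℝ≥0∞) * tailMean μ₂ ℓ := by
    have hme : ∀ i, Measurable fun ω => te (X i ω) := fun i => hteMeas.comp (hXmeas i)
    rw [hFedef]
    dsimp only
    rw [lintegral_finset_sum _ fun i _ => hme i]
    simp [hte1]
  have hB : P μ₂ {ω | ENNReal.ofReal ((n : ℝ) * η / 3) ≤ Fe ω} ≤ ENNReal.ofReal (ε / 2) := by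
    have hmarkov := meas_ge_le_lintegral_div (μ := P μ₂) hFemeas.aemeasurable
      (ε := ENNReal.ofReal ((n : ℝ) * η / 3)) (ENNReal.ofReal_pos.mpr hc).ne' ENNReal.ofReal_ne_top
    refine hmarkov.trans ?_
    rw [hFeint]
    calc (n : ℝ≥0∞) * tailMean μ₂ ℓ / ENNReal.ofReal ((n : ℝ) * η / 3)
        ≤ (n : ℝ≥0∞) * ENNReal.ofReal ε' / ENNReal.ofReal ((n : ℝ) * η / 3) := by
          gcongr
      _ = ENNReal.ofReal ((n : ℝ) * ε') / ENNReal.ofReal ((n : ℝ) * η / 3) := by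
          rw [ENNReal.ofReal_mul hnR.le, ENNReal.ofReal_natCast]
      _ = ENNReal.ofReal ((n : ℝ) * ε' / ((n : ℝ) * η / 3)) := by
          rw [ENNReal.ofReal_div_of_pos hc]
      _ ≤ ENNReal.ofReal (ε / 2) := by
          refine ENNReal.ofReal_le_ofReal ?_
          rw [div_le_iff₀ hc]
          nlinarith
  -- mean decomposition
  set L : ℝ≥0∞ := ∑' k : ℕ, if k < ℓ then (k : ℝ≥0∞) * μ₂ k else 0 with hLdef
  have hsplit : mMean μ₂ = L + tailMean μ₂ ℓ := by
    rw [hLdef]; unfold mMean tailMean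
    rw [← ENNReal.tsum_add]
    refine tsum_congr fun k => ?_
    by_cases h : k < ℓ
    · simp [h, not_le.mpr h]
    · simp [h, not_lt.mp h]
  have hfin : mMean μ₂ ≠ ⊤ := (hN hμ₂).ne
  have hLfin : L ≠ ⊤ := ne_top_of_le_ne_top hfin (hsplit ▸ le_self_add)
  have hTfin : tailMean μ₂ ℓ ≠ ⊤ := ne_top_of_le_ne_top hfin (hsplit ▸ le_add_self)
  have hEYL : EY = L.toReal := by
    rw [hEYdef, integral_eq_lintegral_of_nonneg_ae (Filter.Eventually.of_forall hgnn)
      hgmeas.aestronglyMeasurable]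
    congr 1
    rw [lintegral_countable', hLdef]
    refine tsum_congr fun k => ?_
    rw [PMF.toMeasure_apply_singleton _ _ (measurableSet_singleton _)]
    rw [hgdef]; dsimp only
    split <;> simp [ENNReal.ofReal_natCast]
  have hm : mReal μ₂ = EY + (tailMean μ₂ ℓ).toReal := by
    rw [mReal, hsplit, ENNReal.toReal_add hLfin hTfin, hEYL]
  have hTR : (tailMean μ₂ ℓ).toReal ≤ ε' :=
    ENNReal.toReal_le_of_le_ofReal hε'pos.le htail
  -- event inclusion
  have hsub : {ω : GWOmega | η ≤ |(1 / (n : ℝ)) * (∑ i ∈ Finset.range n, (ω (0, i) : ℝ))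
        - mReal μ₂|} ⊆
      {ω | (n : ℝ) * η / 3 ≤ |W ω - (n : ℝ) * EY|} ∪
        {ω | ENNReal.ofReal ((n : ℝ) * η / 3) ≤ Fe ω} := by
    intro ω hω
    simp only [Set.mem_setOf_eq] at hω
    by_contra hcon
    simp only [Set.mem_union, Set.mem_setOf_eq, not_or, not_le] at hcon
    obtain ⟨hA', hB'⟩ := hcon
    -- the tail sum as a natural number
    set M : ℕ := ∑ i ∈ Finset.range n, (if ℓ ≤ X i ω then X i ω else 0) with hMdef
    have hFeM : Fe ω = (M : ℝ≥0∞) := by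
      rw [hFedef, hMdef]
      dsimp only
      rw [Nat.cast_sum]
      refine Finset.sum_congr rfl fun i _ => ?_
      rw [htedef]; dsimp only
      split <;> simp
    have hMlt : (M : ℝ) < (n : ℝ) * η / 3 := by
      rw [hFeM, ← ENNReal.ofReal_natCast] at hB'
      exact (ENNReal.ofReal_lt_ofReal_iff hc).mp hB'
    -- splitting the sum
    have hS : (∑ i ∈ Finset.range n, (ω (0, i) : ℝ)) = W ω + (M : ℝ) := by
      rw [hWdef, hMdef]
      simp only [Finset.sum_apply, Nat.cast_sum, ← Finset.sum_add_distrib]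
      refine Finset.sum_congr rfl fun i _ => ?_
      rw [hYdef, hgdef]; dsimp only
      rcases lt_or_ge (X i ω) ℓ with h | h
      · simp only [hXdef] at h; simp [h, not_le.mpr h, hXdef]
      · simp only [hXdef] at h; simp [h, not_lt.mpr h, hXdef]
    have habs1 : |(1 / (n : ℝ)) * W ω - EY| < η / 3 := by
      have heq : (1 / (n : ℝ)) * W ω - EY = (W ω - (n : ℝ) * EY) / n := by
        field_simp
      rw [heq, abs_div, abs_of_pos hnR, div_lt_iff₀ hnR]
      calc |W ω - (n : ℝ) * EY| < (n : ℝ) * η / 3 := hA'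
        _ = η / 3 * n := by ring
    have habs2 : (1 / (n : ℝ)) * (M : ℝ) < η / 3 := by
      rw [div_mul_eq_mul_div, one_mul, div_lt_iff₀ hnR]
      calc (M : ℝ) < (n : ℝ) * η / 3 := hMlt
        _ = η / 3 * n := by ring
    have hMnn : (0 : ℝ) ≤ (1 / (n : ℝ)) * (M : ℝ) := by positivity
    have htr : |(1 / (n : ℝ)) * (∑ i ∈ Finset.range n, (ω (0, i) : ℝ)) - mReal μ₂|
        ≤ |(1 / (n : ℝ)) * W ω - EY| + (1 / (n : ℝ)) * (M : ℝ)
          + (tailMean μ₂ ℓ).toReal := by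
      have h0 : (1 / (n : ℝ)) * (∑ i ∈ Finset.range n, (ω (0, i) : ℝ)) - mReal μ₂
          = ((1 / (n : ℝ)) * W ω - EY)
            + ((1 / (n : ℝ)) * (M : ℝ) - (tailMean μ₂ ℓ).toReal) := by
        rw [hS, hm]; ring
      rw [h0]
      calc |((1 / (n : ℝ)) * W ω - EY)
            + ((1 / (n : ℝ)) * (M : ℝ) - (tailMean μ₂ ℓ).toReal)|
          ≤ |(1 / (n : ℝ)) * W ω - EY|
            + |(1 / (n : ℝ)) * (M : ℝ) - (tailMean μ₂ ℓ).toReal| := abs_add_le _ _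
        _ ≤ |(1 / (n : ℝ)) * W ω - EY| + ((1 / (n : ℝ)) * (M : ℝ)
            + (tailMean μ₂ ℓ).toReal) := by
            refine add_le_add_right ?_ _
            rw [abs_sub_le_iff]
            constructor
            · linarith [ENNReal.toReal_nonneg (a := tailMean μ₂ ℓ)]
            · linarith
        _ = _ := by ring
    have : η < η := by
      calc η ≤ |(1 / (n : ℝ)) * (∑ i ∈ Finset.range n, (ω (0, i) : ℝ)) - mReal μ₂| := hω
        _ ≤ |(1 / (n : ℝ)) * W ω - EY| + (1 / (n : ℝ)) * (M : ℝ)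
            + (tailMean μ₂ ℓ).toReal := htr
        _ < η / 3 + η / 3 + η / 3 := by
            have : (tailMean μ₂ ℓ).toReal ≤ η / 3 := le_trans hTR hε'1
            linarith
        _ = η := by ring
    exact lt_irrefl _ this
  calc P μ₂ {ω | η ≤ |(1 / (n : ℝ)) * (∑ i ∈ Finset.range n, (ω (0, i) : ℝ)) - mReal μ₂|}
      ≤ P μ₂ ({ω | (n : ℝ) * η / 3 ≤ |W ω - (n : ℝ) * EY|} ∪
        {ω | ENNReal.ofReal ((n : ℝ) * η / 3) ≤ Fe ω}) := measure_mono hsub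
    _ ≤ P μ₂ {ω | (n : ℝ) * η / 3 ≤ |W ω - (n : ℝ) * EY|}
        + P μ₂ {ω | ENNReal.ofReal ((n : ℝ) * η / 3) ≤ Fe ω} := measure_union_le _ _
    _ ≤ ENNReal.ofReal (ε / 2) + ENNReal.ofReal (ε / 2) := add_le_add hA hB
    _ = ENNReal.ofReal ε := by
        rw [← ENNReal.ofReal_add (by linarith) (by linarith)]
        norm_num
end

section
/- The sequence (m̂_n) of Lotka–Nagaev estimators is finite sample robust on 𝒩₁¹: for every μ₁ ∈ 𝒩₁¹, n ∈ ℕ, and ε > 0 there is δ > 0 such that for all μ₂ ∈ 𝒩₁¹ with d_TV(μ₁,μ₂) ≤ δ one has ρ(ℙ^{μ₁}∘m̂_n^{−1}, ℙ^{μ₂}∘m̂_n^{−1}) ≤ ε. -/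
open MeasureTheory ProbabilityTheory ENNReal Metric

noncomputable section LNAuxiliary


/-- symmetrized difference in `ℝ≥0∞` -/
def dd (a b : ℝ≥0∞) : ℝ≥0∞ := (a - b) + (b - a)

lemma le_add_dd (a b : ℝ≥0∞) : a ≤ b + dd a b := by
  calc a ≤ (a - b) + b := le_tsub_add
  _ ≤ ((a - b) + (b - a)) + b := by gcongr; exact le_self_add
  _ = b + dd a b := by rw [dd]; ring

lemma sub3 (x y z : ℝ≥0∞) : x - z ≤ (x - y) + (y - z) := by
  rw [tsub_le_iff_right]
  calc x ≤ (x - y) + y := le_tsub_add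
  _ ≤ (x - y) + ((y - z) + z) := by gcongr; exact le_tsub_add
  _ = (x - y) + (y - z) + z := by ring

lemma ddm1 (a c b : ℝ≥0∞) : a * b - c * b ≤ (a - c) * b := by
  rw [tsub_le_iff_right, ← add_mul]
  exact mul_le_mul_left le_tsub_add b

lemma ddm2 (c b d : ℝ≥0∞) : c * b - c * d ≤ c * (b - d) := by
  rw [tsub_le_iff_right, ← mul_add]
  exact mul_le_mul_right le_tsub_add c

lemma dd_mul (a b c d : ℝ≥0∞) : dd (a * b) (c * d) ≤ dd a c * b + c * dd b d := by
  have h1 : a * b - c * d ≤ (a - c) * b + c * (b - d) :=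
    (sub3 _ (c * b) _).trans (add_le_add (ddm1 _ _ _) (ddm2 _ _ _))
  have h2 : c * d - a * b ≤ c * (d - b) + (c - a) * b :=
    (sub3 _ (c * b) _).trans (add_le_add (ddm2 _ _ _) (ddm1 _ _ _))
  calc dd (a * b) (c * d) ≤ ((a - c) * b + c * (b - d)) + (c * (d - b) + (c - a) * b) :=
        add_le_add h1 h2
  _ = ((a - c) + (c - a)) * b + c * ((b - d) + (d - b)) := by ring
  _ = dd a c * b + c * dd b d := rfl

lemma mass (n : ℕ) (μ : PMF ℕ) : ∑' g : Fin n → ℕ, ∏ i, μ (g i) = 1 := by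
  induction n with
  | zero =>
    rw [tsum_eq_single (default : Fin 0 → ℕ) (fun b hb => absurd (Subsingleton.elim b default) hb)]
    simp
  | succ n ih =>
    rw [← (Fin.consEquiv (fun _ : Fin (n + 1) => ℕ)).tsum_eq]
    have hterm : ∀ (a : ℕ) (b : Fin n → ℕ),
        (∏ i, μ ((Fin.consEquiv (fun _ => ℕ)) (a, b) i)) = μ a * ∏ i, μ (b i) := by
      intro a b
      simp [Fin.consEquiv, Fin.prod_univ_succ]
    rw [ENNReal.tsum_prod']
    have : ∑' (a : ℕ) (b : Fin n → ℕ), (∏ i, μ ((Fin.consEquiv (fun _ => ℕ)) (a, b) i))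
        = ∑' (a : ℕ) (b : Fin n → ℕ), μ a * ∏ i, μ (b i) :=
      tsum_congr fun a => tsum_congr fun b => hterm a b
    rw [this]
    simp [ENNReal.tsum_mul_left, ih, μ.tsum_coe]

lemma proddiff (n : ℕ) (μ₁ μ₂ : PMF ℕ) :
    ∑' g : Fin n → ℕ, dd (∏ i, μ₁ (g i)) (∏ i, μ₂ (g i)) ≤
      n * ∑' k, dd (μ₁ k) (μ₂ k) := by
  induction n with
  | zero =>
    rw [tsum_eq_single (default : Fin 0 → ℕ) (fun b hb => absurd (Subsingleton.elim b default) hb)]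
    simp [dd]
  | succ n ih =>
    rw [← (Fin.consEquiv (fun _ : Fin (n + 1) => ℕ)).tsum_eq]
    have hterm : ∀ (a : ℕ) (b : Fin n → ℕ) (μ : PMF ℕ),
        (∏ i, μ ((Fin.consEquiv (fun _ => ℕ)) (a, b) i)) = μ a * ∏ i, μ (b i) := by
      intro a b μ
      simp [Fin.consEquiv, Fin.prod_univ_succ]
    rw [ENNReal.tsum_prod']
    have hre : ∑' (a : ℕ) (b : Fin n → ℕ),
        dd (∏ i, μ₁ ((Fin.consEquiv (fun _ => ℕ)) (a, b) i))
           (∏ i, μ₂ ((Fin.consEquiv (fun _ => ℕ)) (a, b) i))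
        = ∑' (a : ℕ) (b : Fin n → ℕ), dd (μ₁ a * ∏ i, μ₁ (b i)) (μ₂ a * ∏ i, μ₂ (b i)) :=
      tsum_congr fun a => tsum_congr fun b => by rw [hterm a b μ₁, hterm a b μ₂]
    rw [hre]
    calc ∑' (a : ℕ) (b : Fin n → ℕ), dd (μ₁ a * ∏ i, μ₁ (b i)) (μ₂ a * ∏ i, μ₂ (b i))
        ≤ ∑' (a : ℕ) (b : Fin n → ℕ),
          (dd (μ₁ a) (μ₂ a) * ∏ i, μ₁ (b i) + μ₂ a * dd (∏ i, μ₁ (b i)) (∏ i, μ₂ (b i))) := by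
          exact ENNReal.tsum_le_tsum fun a => ENNReal.tsum_le_tsum fun b => dd_mul _ _ _ _
      _ = (∑' k, dd (μ₁ k) (μ₂ k)) * 1 +
          1 * ∑' b : Fin n → ℕ, dd (∏ i, μ₁ (b i)) (∏ i, μ₂ (b i)) := by
          simp only [ENNReal.tsum_add, ENNReal.tsum_mul_left, ENNReal.tsum_mul_right]
          rw [mass n μ₁, μ₂.tsum_coe]
      _ ≤ (∑' k, dd (μ₁ k) (μ₂ k)) * 1 + 1 * (n * ∑' k, dd (μ₁ k) (μ₂ k)) := by gcongr
      _ = (n + 1 : ℕ) * ∑' k, dd (μ₁ k) (μ₂ k) := by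
          push_cast; ring

lemma proddiff' (ι : Type*) [Fintype ι] (μ₁ μ₂ : PMF ℕ) :
    ∑' g : ι → ℕ, dd (∏ i, μ₁ (g i)) (∏ i, μ₂ (g i)) ≤
      (Fintype.card ι) * ∑' k, dd (μ₁ k) (μ₂ k) := by
  have e : ι ≃ Fin (Fintype.card ι) := Fintype.equivFin ι
  rw [← (Equiv.arrowCongr e.symm (Equiv.refl ℕ)).tsum_eq]
  refine le_trans (le_of_eq (tsum_congr fun h => ?_)) (proddiff (Fintype.card ι) μ₁ μ₂)
  have hp : ∀ μ : PMF ℕ, (∏ i, μ ((Equiv.arrowCongr e.symm (Equiv.refl ℕ)) h i)) = ∏ j, μ (h j) := by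
    intro μ
    have he2 : ∀ i : ι, (Equiv.arrowCongr e.symm (Equiv.refl ℕ)) h i = h (e i) := by
      intro i; simp [Equiv.arrowCongr_apply, Function.comp]
    simp only [he2]
    exact Equiv.prod_comp e fun j => μ (h j)
  rw [hp μ₁, hp μ₂]



lemma measurable_mhat (n : ℕ) : Measurable (mhat n) := by
  have h : Measurable fun ω => (Z n ω, Z (n - 1) ω) :=
    (measurable_Z n).prodMk (measurable_Z (n - 1))
  exact (Measurable.of_discrete (f := fun p : ℕ × ℕ => (p.1 : NNReal) / (p.2 : NNReal))).comp h

lemma Z_eq_of_agree (n M : ℕ) (ω ω' : GWOmega)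
    (hag : ∀ j i, j < n → i < M → ω' (j, i) = ω (j, i))
    (hbd : ∀ j, j < n → Z j ω ≤ M) : ∀ k, k ≤ n → Z k ω' = Z k ω := by
  intro k hk
  induction k with
  | zero => rfl
  | succ k ih =>
    have hkn : k < n := Nat.lt_of_succ_le hk
    show (∑ i ∈ Finset.range (Z k ω'), ω' (k, i)) = ∑ i ∈ Finset.range (Z k ω), ω (k, i)
    rw [ih (Nat.le_of_succ_le hk)]
    refine Finset.sum_congr rfl fun i hi => ?_
    exact hag k i hkn (lt_of_lt_of_le (Finset.mem_range.mp hi) (hbd k hkn))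

lemma meas_atom {P : Measure GWOmega} {μ : PMF ℕ} (h : IsGWMeasure P μ)
    (F : Finset (ℕ × ℕ)) (g : ↥F → ℕ) :
    P {ω : GWOmega | ∀ ki : ↥F, ω ki = g ki} = ∏ ki : ↥F, μ (g ki) := by
  obtain ⟨_, hind, hmap⟩ := h
  set sets : ∀ _ : ℕ × ℕ, Set ℕ := fun ki => {x | ∀ h : ki ∈ F, x = g ⟨ki, h⟩} with hsets
  have hset : {ω : GWOmega | ∀ ki : ↥F, ω ki = g ki} =
      ⋂ ki ∈ F, (fun ω : GWOmega => ω ki) ⁻¹' sets ki := by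
    ext ω
    simp only [Set.mem_setOf_eq, Set.mem_iInter, Set.mem_preimage, hsets]
    constructor
    · intro hh ki hki h'; exact hh ⟨ki, h'⟩
    · intro hh ki; exact hh ki ki.2 ki.2
  rw [hset, iIndepFun_iff_measure_inter_preimage_eq_mul.mp hind F
    (fun ki _ => MeasurableSet.of_discrete)]
  have hterm : ∀ ki : ℕ × ℕ, ki ∈ F →
      P ((fun ω : GWOmega => ω ki) ⁻¹' sets ki) = μ.toMeasure (sets ki) := by
    intro ki _
    rw [← hmap ki, Measure.map_apply (measurable_pi_apply ki) MeasurableSet.of_discrete]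
  rw [Finset.prod_congr rfl hterm, ← Finset.prod_attach F fun ki => μ.toMeasure (sets ki)]
  rw [← Finset.univ_eq_attach]
  refine Finset.prod_congr rfl fun ki _ => ?_
  have : sets (ki : ℕ × ℕ) = {g ki} := by
    ext x
    simp only [hsets, Set.mem_setOf_eq, Set.mem_singleton_iff]
    constructor
    · intro hh; exact hh ki.2
    · intro hh _; exact hh
  rw [this, PMF.toMeasure_apply_singleton _ _ (measurableSet_singleton _)]

lemma meas_cyl {P : Measure GWOmega} {μ : PMF ℕ} (h : IsGWMeasure P μ)
    (F : Finset (ℕ × ℕ)) (T : Set (↥F → ℕ)) :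
    P {ω : GWOmega | (fun ki : ↥F => ω ki) ∈ T} =
      ∑' g : T, ∏ ki : ↥F, μ ((g : ↥F → ℕ) ki) := by
  have hrep : {ω : GWOmega | (fun ki : ↥F => ω ki) ∈ T} =
      ⋃ g : T, {ω : GWOmega | ∀ ki : ↥F, ω ki = (g : ↥F → ℕ) ki} := by
    ext ω
    simp only [Set.mem_setOf_eq, Set.mem_iUnion]
    constructor
    · intro hT; exact ⟨⟨_, hT⟩, fun ki => rfl⟩
    · rintro ⟨g, hg⟩
      have : (fun ki : ↥F => ω ki) = (g : ↥F → ℕ) := funext hg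
      rw [this]; exact g.2
  rw [hrep, measure_iUnion ?_ ?_]
  · exact tsum_congr fun g => meas_atom ⟨h.1, h.2.1, h.2.2⟩ F g
  · intro g g' hne
    simp only [Set.disjoint_left, Set.mem_setOf_eq]
    intro ω hg hg'
    exact hne (Subtype.ext (funext fun ki => by rw [← hg ki, ← hg' ki]))
  · intro g
    have : {ω : GWOmega | ∀ ki : ↥F, ω ki = (g : ↥F → ℕ) ki} =
        ⋂ ki : ↥F, (fun ω : GWOmega => ω (ki : ℕ × ℕ)) ⁻¹' {(g : ↥F → ℕ) ki} := by
      ext ω; simp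
    rw [this]
    exact MeasurableSet.iInter fun ki => measurable_pi_apply _ (measurableSet_singleton _)

lemma dd_fin (a b : ℝ≥0∞) (ha : a ≠ ⊤) (hb : b ≠ ⊤) :
    dd a b = ENNReal.ofReal |a.toReal - b.toReal| := by
  have key : ∀ x y : ℝ≥0∞, x ≠ ⊤ → y ≠ ⊤ → y ≤ x →
      dd x y = ENNReal.ofReal |x.toReal - y.toReal| := by
    intro x y hx hy hyx
    have h1 : y.toReal ≤ x.toReal := ENNReal.toReal_le_toReal hy hx |>.mpr hyx
    rw [dd, tsub_eq_zero_of_le hyx, add_zero, abs_of_nonneg (by linarith),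
      ENNReal.ofReal_sub _ ENNReal.toReal_nonneg, ENNReal.ofReal_toReal hx,
      ENNReal.ofReal_toReal hy]
  rcases le_total b a with hba | hab
  · exact key a b ha hb hba
  · rw [show dd a b = dd b a by rw [dd, dd]; ring, key b a hb ha hab, abs_sub_comm]

lemma dd_pmf (μ₁ μ₂ : PMF ℕ) :
    ∑' k, dd (μ₁ k) (μ₂ k) = ENNReal.ofReal (2 * dTV μ₁ μ₂) := by
  have hs1 : Summable fun k => (μ₁ k).toReal :=
    ENNReal.summable_toReal (by rw [μ₁.tsum_coe]; exact one_ne_top)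
  have hs2 : Summable fun k => (μ₂ k).toReal :=
    ENNReal.summable_toReal (by rw [μ₂.tsum_coe]; exact one_ne_top)
  have hs : Summable (fun k => |(μ₁ k).toReal - (μ₂ k).toReal|) := by
    refine Summable.of_nonneg_of_le (fun k => abs_nonneg _) (fun k => ?_) (hs1.add hs2)
    calc |(μ₁ k).toReal - (μ₂ k).toReal| ≤ |(μ₁ k).toReal| + |(μ₂ k).toReal| := abs_sub _ _
    _ = (μ₁ k).toReal + (μ₂ k).toReal := by
        rw [abs_of_nonneg ENNReal.toReal_nonneg, abs_of_nonneg ENNReal.toReal_nonneg]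
  have h1 : ∀ k, dd (μ₁ k) (μ₂ k) = ENNReal.ofReal |(μ₁ k).toReal - (μ₂ k).toReal| :=
    fun k => dd_fin _ _ (μ₁.apply_ne_top k) (μ₂.apply_ne_top k)
  rw [tsum_congr h1, ← ENNReal.ofReal_tsum_of_nonneg (fun k => abs_nonneg _) hs]
  congr 1
  rw [dTV]; ring


lemma tsum_sub_le {α : Type*} (f : α → ℝ≥0∞) (T : Set α) : ∑' x : T, f x ≤ ∑' x, f x := by
  rw [tsum_subtype]
  exact ENNReal.tsum_le_tsum (Set.indicator_le_self _ _)

end LNAuxiliary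

/-- Theorem 5.4(i): the Lotka–Nagaev estimator is finite sample robust on all
of `𝒩₁¹`. -/
theorem lotka_nagaev_finite_sample_robust
    (P : PMF ℕ → Measure GWOmega) (hP : ∀ μ, IsGWMeasure (P μ) μ) :
    ∀ μ₁ ∈ N11, ∀ n : ℕ, 1 ≤ n → ∀ ε > (0 : ℝ), ∃ δ > (0 : ℝ),
      ∀ μ₂ ∈ N11, dTV μ₁ μ₂ ≤ δ →
        prohorov (lawMhat (P μ₁) n) (lawMhat (P μ₂) n) ≤ ε := by
  intro μ₁ _ n hn ε hε
  haveI hprob1 : IsProbabilityMeasure (P μ₁) := (hP μ₁).1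
  -- the bad sets
  set C : ℕ → Set GWOmega := fun M => {ω | ∃ k, k < n ∧ M < Z k ω} with hC
  have hCmeas : ∀ M, MeasurableSet (C M) := by
    intro M
    have hrep : C M = ⋃ k, ⋃ (_ : k < n), Z k ⁻¹' Set.Ioi M := by
      ext ω
      simp only [hC, Set.mem_setOf_eq, Set.mem_iUnion, Set.mem_preimage, Set.mem_Ioi]
      tauto
    rw [hrep]
    exact MeasurableSet.iUnion fun k => MeasurableSet.iUnion fun _ =>
      measurable_Z k measurableSet_Ioi
  have hCanti : Antitone C := by
    intro M M' hMM' ω hω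
    simp only [hC, Set.mem_setOf_eq] at hω ⊢
    obtain ⟨k, hk, hZ⟩ := hω
    exact ⟨k, hk, lt_of_le_of_lt hMM' hZ⟩
  have hCempty : ⋂ M, C M = ∅ := by
    ext ω
    simp only [Set.mem_iInter, Set.mem_empty_iff_false, iff_false, not_forall]
    refine ⟨(Finset.range n).sup fun k => Z k ω, ?_⟩
    simp only [hC, Set.mem_setOf_eq, not_exists]
    rintro k ⟨hk, hZ⟩
    exact absurd (Finset.le_sup (f := fun k => Z k ω) (Finset.mem_range.mpr hk))
      (not_le.mpr hZ)
  have htend : Filter.Tendsto (fun M => P μ₁ (C M)) Filter.atTop (nhds 0) := by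
    have h := tendsto_measure_iInter_atTop (μ := P μ₁)
      (fun M => (hCmeas M).nullMeasurableSet) hCanti ⟨0, measure_ne_top _ _⟩
    rw [hCempty] at h
    simpa [Function.comp_def] using h
  obtain ⟨M, hM⟩ : ∃ M, P μ₁ (C M) ≤ ENNReal.ofReal (ε / 2) := by
    have := (htend.eventually_lt_const
      (show (0 : ℝ≥0∞) < ENNReal.ofReal (ε / 2) by
        rw [ENNReal.ofReal_pos]; linarith)).exists
    obtain ⟨M, hM⟩ := this
    exact ⟨M, hM.le⟩
  set F : Finset (ℕ × ℕ) := Finset.range n ×ˢ Finset.range M with hF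
  set c : ℕ := F.card with hc
  set δ : ℝ := ε / (4 * (c + 1)) with hδ
  have hδpos : 0 < δ := by positivity
  refine ⟨δ, hδpos, ?_⟩
  intro μ₂ _ hdtv
  haveI hprob2 : IsProbabilityMeasure (P μ₂) := (hP μ₂).1
  have hD : ∑' k, dd (μ₁ k) (μ₂ k) ≤ ENNReal.ofReal (2 * δ) := by
    rw [dd_pmf]
    refine ENNReal.ofReal_le_ofReal ?_
    linarith
  have key : ∀ A : Set NNReal, MeasurableSet A →
      lawMhat (P μ₁) n A ≤ lawMhat (P μ₂) n (Metric.cthickening ε A) + ENNReal.ofReal ε := by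
    intro A hA
    set B : Set GWOmega := mhat n ⁻¹' A ∩ (C M)ᶜ with hB
    set T : Set (↥F → ℕ) := (fun ω (ki : ↥F) => ω (ki : ℕ × ℕ)) '' B with hT
    -- C M membership characterization
    have hCmem : ∀ (ω : GWOmega), ω ∈ (C M)ᶜ ↔ ∀ k, k < n → Z k ω ≤ M := by
      intro ω
      simp only [hC, Set.mem_compl_iff, Set.mem_setOf_eq, not_exists, not_and, not_lt]
    -- B is a cylinder set over F
    have hBT : B = {ω : GWOmega | (fun ki : ↥F => ω (ki : ℕ × ℕ)) ∈ T} := by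
      ext ω'
      simp only [hT, Set.mem_setOf_eq, Set.mem_image]
      constructor
      · intro hω'; exact ⟨ω', hω', rfl⟩
      · rintro ⟨ω, hω, hres⟩
        have hag : ∀ j i, j < n → i < M → ω' (j, i) = ω (j, i) := by
          intro j i hj hi
          have hmem : ((j, i) : ℕ × ℕ) ∈ F := by
            simp [hF, Finset.mem_product, hj, hi]
          have := congrFun hres ⟨(j, i), hmem⟩
          exact this.symm
        have hbd : ∀ j, j < n → Z j ω ≤ M := (hCmem ω).mp hω.2
        have hZeq : ∀ k, k ≤ n → Z k ω' = Z k ω := Z_eq_of_agree n M ω ω' hag hbd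
        constructor
        · have hm : mhat n ω' = mhat n ω := by
            rw [mhat, mhat, hZeq n le_rfl, hZeq (n - 1) (Nat.sub_le n 1)]
          rw [Set.mem_preimage, hm]
          exact hω.1
        · rw [hCmem]
          intro k hk
          rw [hZeq k hk.le]
          exact hbd k hk
    -- compare the two measures on B
    have hcomp : P μ₁ B ≤ P μ₂ B + (c : ℝ≥0∞) * ∑' k, dd (μ₁ k) (μ₂ k) := by
      rw [hBT, meas_cyl (hP μ₁) F T, meas_cyl (hP μ₂) F T]
      calc ∑' g : T, ∏ ki : ↥F, μ₁ ((g : ↥F → ℕ) ki)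
          ≤ ∑' g : T, (∏ ki : ↥F, μ₂ ((g : ↥F → ℕ) ki) +
            dd (∏ ki : ↥F, μ₁ ((g : ↥F → ℕ) ki)) (∏ ki : ↥F, μ₂ ((g : ↥F → ℕ) ki))) :=
            ENNReal.tsum_le_tsum fun g => le_add_dd _ _
        _ = (∑' g : T, ∏ ki : ↥F, μ₂ ((g : ↥F → ℕ) ki)) +
            ∑' g : T, dd (∏ ki : ↥F, μ₁ ((g : ↥F → ℕ) ki)) (∏ ki : ↥F, μ₂ ((g : ↥F → ℕ) ki)) :=
            ENNReal.tsum_add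
        _ ≤ (∑' g : T, ∏ ki : ↥F, μ₂ ((g : ↥F → ℕ) ki)) +
            ∑' g : ↥F → ℕ, dd (∏ ki : ↥F, μ₁ (g ki)) (∏ ki : ↥F, μ₂ (g ki)) := by
            gcongr
            exact tsum_sub_le
              (fun g : ↥F → ℕ => dd (∏ ki : ↥F, μ₁ (g ki)) (∏ ki : ↥F, μ₂ (g ki))) T
        _ ≤ (∑' g : T, ∏ ki : ↥F, μ₂ ((g : ↥F → ℕ) ki)) +
            (c : ℝ≥0∞) * ∑' k, dd (μ₁ k) (μ₂ k) := by
            gcongr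
            have := proddiff' ↥F μ₁ μ₂
            rwa [Fintype.card_coe] at this
    have hsplit : P μ₁ (mhat n ⁻¹' A) ≤ P μ₁ B + P μ₁ (C M) := by
      have h1 := measure_le_inter_add_diff (P μ₁) (mhat n ⁻¹' A) ((C M)ᶜ)
      have h2 : P μ₁ (mhat n ⁻¹' A \ (C M)ᶜ) ≤ P μ₁ (C M) :=
        measure_mono fun ω hω => by simpa using hω.2
      rw [hB]
      exact le_trans h1 (add_le_add le_rfl h2)
    have hsub : B ⊆ mhat n ⁻¹' (Metric.cthickening ε A) :=
      fun ω hω => Metric.self_subset_cthickening A hω.1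
    have harith : (c : ℝ≥0∞) * ENNReal.ofReal (2 * δ) ≤ ENNReal.ofReal (ε / 2) := by
      rw [show ((c : ℝ≥0∞)) = ENNReal.ofReal (c : ℝ) by
          rw [ENNReal.ofReal_natCast],
        ← ENNReal.ofReal_mul (Nat.cast_nonneg c)]
      refine ENNReal.ofReal_le_ofReal ?_
      rw [hδ]
      have h4 : (0 : ℝ) < 4 * ((c : ℝ) + 1) := by have := (Nat.cast_nonneg c : (0:ℝ) ≤ c); linarith
      have heq : (c : ℝ) * (2 * (ε / (4 * ((c : ℝ) + 1)))) = (c : ℝ) / ((c : ℝ) + 1) * (ε / 2) := by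
        field_simp
        ring
      rw [heq]
      have hle : (c : ℝ) / ((c : ℝ) + 1) ≤ 1 := by
        rw [div_le_one (by have := (Nat.cast_nonneg c : (0:ℝ) ≤ c); linarith)]
        linarith
      exact mul_le_of_le_one_left (by positivity) hle
    calc lawMhat (P μ₁) n A = P μ₁ (mhat n ⁻¹' A) := by
          rw [lawMhat, Measure.map_apply (measurable_mhat n) hA]
      _ ≤ P μ₁ B + P μ₁ (C M) := hsplit
      _ ≤ (P μ₂ B + (c : ℝ≥0∞) * ∑' k, dd (μ₁ k) (μ₂ k)) + ENNReal.ofReal (ε / 2) :=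
          add_le_add hcomp hM
      _ ≤ (P μ₂ (mhat n ⁻¹' (Metric.cthickening ε A)) + ENNReal.ofReal (ε / 2)) +
          ENNReal.ofReal (ε / 2) := by
          exact add_le_add (add_le_add (measure_mono hsub)
            (le_trans (mul_le_mul_right hD _) harith)) le_rfl
      _ = lawMhat (P μ₂) n (Metric.cthickening ε A) + ENNReal.ofReal ε := by
          rw [lawMhat, Measure.map_apply (measurable_mhat n)
            (Metric.isClosed_cthickening).measurableSet, add_assoc,
            ← ENNReal.ofReal_add (by linarith) (by linarith)]
          norm_num
  rw [prohorov]
  exact csInf_le ⟨0, fun x hx => hx.1.le⟩ ⟨hε, key⟩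
end
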